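/- arXiv:math/0207296 — 2 statements merged into one kernel-verified Lean document; each statement's English description precedes it below -/
import Mathlib

section
/- For all p, p' ∈ Y one has d_m(p,p') ≤ d(p,p') ≤ d_m(p,p') + 20δ, where d is the interior metric on Y induced by d_m. -/
open Set Metric Filter
open scoped ENNReal NNReal

/-- `γ`, restricted to `[0, dist x y]`, is a unit-speed (arclength-parameterized) geodesic
segment from `x` to `y`. -/
def IsGeodSegment {X : Type*} [MetricSpace X] (γ : ℝ → X) (x y : X) : Prop :=
  γ 0 = x ∧ γ (dist x y) = y ∧
    ∀ s ∈ Set.Icc (0 : ℝ) (dist x y), ∀ t ∈ Set.Icc (0 : ℝ) (dist x y),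
      dist (γ s) (γ t) = |s - t|

/-- A metric space is geodesic if any two points are joined by a geodesic segment. -/
def GeodesicMS (X : Type*) [MetricSpace X] : Prop :=
  ∀ x y : X, ∃ γ : ℝ → X, IsGeodSegment γ x y

/-- The image (side) of a geodesic segment from `x` to `y`. -/
def segImg {X : Type*} [MetricSpace X] (γ : ℝ → X) (x y : X) : Set X :=
  γ '' Set.Icc 0 (dist x y)

/-- `X` is `δ`-hyperbolic: each side of each geodesic triangle is contained in the closed
`δ`-neighborhood of the union of the two other sides.  (Since the vertices `x y z` and the
three sides are universally quantified, the condition for the single side `γ_{xy}` implies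
it for all three sides.) -/
def DeltaHyp (X : Type*) [MetricSpace X] (δ : ℝ) : Prop :=
  ∀ (x y z : X) (gxy gxz gyz : ℝ → X),
    IsGeodSegment gxy x y → IsGeodSegment gxz x z → IsGeodSegment gyz y z →
      ∀ s ∈ Set.Icc (0 : ℝ) (dist x y),
        ∃ w ∈ segImg gxz x z ∪ segImg gyz y z, dist (gxy s) w ≤ δ

/-- `X` is hyperbolic if it is `δ`-hyperbolic for some `δ ≥ 0`. -/
def GromovHyperbolic (X : Type*) [MetricSpace X] : Prop :=
  ∃ δ : ℝ, 0 ≤ δ ∧ DeltaHyp X δ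

/-- The Gromov product `(y⬝z)_x`. -/
noncomputable def gp {X : Type*} [MetricSpace X] (y z x : X) : ℝ :=
  (dist y x + dist z x - dist y z) / 2

/-- A geodesic ray (unit-speed, defined on `[0,∞)`). -/
def IsRay {X : Type*} [MetricSpace X] (γ : ℝ → X) : Prop :=
  ∀ s ∈ Set.Ici (0 : ℝ), ∀ t ∈ Set.Ici (0 : ℝ), dist (γ s) (γ t) = |s - t|

/-- `B` is the Busemann function associated to some geodesic ray. -/
def IsBusemann {X : Type*} [MetricSpace X] (B : X → ℝ) : Prop :=
  ∃ γ : ℝ → X, IsRay γ ∧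
    ∀ x : X, Filter.Tendsto (fun t => dist x (γ t) - t) Filter.atTop (nhds (B x))

/-- `γ` is a `B`-ray: a geodesic ray along which `B` decreases with unit speed. -/
def IsBRay {X : Type*} [MetricSpace X] (B : X → ℝ) (γ : ℝ → X) : Prop :=
  IsRay γ ∧ ∀ t ∈ Set.Ici (0 : ℝ), B (γ t) = B (γ 0) - t

/-- A `T`-function on `[α,ω]`: `f t = |t - m| + k` for some `m ∈ [α,ω]` and `k ∈ ℝ`. -/
def IsTFun (f : ℝ → ℝ) (α ω : ℝ) : Prop :=
  ∃ m ∈ Set.Icc α ω, ∃ k : ℝ, ∀ t ∈ Set.Icc α ω, f t = |t - m| + k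

/-- A `δ`-`T`-function on `[α,ω]`: uniformly `δ`-close to a `T`-function. -/
def IsDeltaTFun (δ : ℝ) (f : ℝ → ℝ) (α ω : ℝ) : Prop :=
  ∃ g : ℝ → ℝ, IsTFun g α ω ∧ ∀ t ∈ Set.Icc α ω, |f t - g t| ≤ δ

/-- The interior (induced length) metric associated to the metric of `Z`: the infimum of
lengths (total variations) of continuous paths joining the two points, with value in `ℝ≥0∞`. -/
noncomputable def intDist {Z : Type*} [MetricSpace Z] (p q : Z) : ℝ≥0∞ :=
  ⨅ (c : ℝ → Z) (_ : ContinuousOn c (Set.Icc 0 1)) (_ : c 0 = p) (_ : c 1 = q),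
    eVariationOn c (Set.Icc (0 : ℝ) 1)

/-- The "Gromov product with a Busemann function": `(x'⬝B)_x = ½(d(x,x') + B(x) - B(x'))`. -/
noncomputable def gpB {X : Type*} [MetricSpace X] (B : X → ℝ) (x x' : X) : ℝ :=
  (dist x x' + B x - B x') / 2

/-- Unit-speed geodesic segment with respect to a bare distance function `D`. -/
def IsGeodSegmentD {Z : Type*} (D : Z → Z → ℝ) (γ : ℝ → Z) (x y : Z) : Prop :=
  γ 0 = x ∧ γ (D x y) = y ∧
    ∀ s ∈ Set.Icc (0 : ℝ) (D x y), ∀ t ∈ Set.Icc (0 : ℝ) (D x y), D (γ s) (γ t) = |s - t|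

/-- `δ`-hyperbolicity with respect to a bare distance function `D`. -/
def DeltaHypD {Z : Type*} (D : Z → Z → ℝ) (δ : ℝ) : Prop :=
  ∀ (x y z : Z) (gxy gxz gyz : ℝ → Z),
    IsGeodSegmentD D gxy x y → IsGeodSegmentD D gxz x z → IsGeodSegmentD D gyz y z →
      ∀ s ∈ Set.Icc (0 : ℝ) (D x y),
        ∃ w ∈ (gxz '' Set.Icc 0 (D x z)) ∪ (gyz '' Set.Icc 0 (D y z)), D (gxy s) w ≤ δ
section Helpers

variable {X : Type*} [MetricSpace X]

lemma busemann_le_add {B : X → ℝ} {σ : ℝ → X}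
    (hlim : ∀ z : X, Filter.Tendsto (fun t => dist z (σ t) - t) Filter.atTop (nhds (B z)))
    (z w : X) : B z ≤ B w + dist z w := by
  have h2 : Filter.Tendsto (fun t => dist w (σ t) - t + dist z w) Filter.atTop
      (nhds (B w + dist z w)) := (hlim w).add_const _
  refine le_of_tendsto_of_tendsto' (hlim z) h2 fun t => ?_
  have := dist_triangle z w (σ t); linarith

lemma busemann_lip {B : X → ℝ} (hB : IsBusemann B) (z w : X) : |B z - B w| ≤ dist z w := by
  obtain ⟨σ, -, hlim⟩ := hB
  rw [abs_le]
  constructor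
  · have := busemann_le_add hlim w z; rw [dist_comm] at this; linarith
  · have := busemann_le_add hlim z w; linarith

lemma busemann_antitone {B : X → ℝ} {σ : ℝ → X} (hray : IsRay σ)
    (hlim : ∀ z : X, Filter.Tendsto (fun t => dist z (σ t) - t) Filter.atTop (nhds (B z)))
    (z : X) {n : ℝ} (hn : 0 ≤ n) : B z ≤ dist z (σ n) - n := by
  refine le_of_tendsto (hlim z) ?_
  filter_upwards [Filter.eventually_ge_atTop n] with m hm
  have hσ : dist (σ n) (σ m) = m - n := by
    rw [hray n hn m (hn.trans hm), abs_sub_comm, abs_of_nonneg (by linarith)]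
  have := dist_triangle z (σ n) (σ m)
  linarith

lemma geod_reverse {γ : ℝ → X} {x y : X} (h : IsGeodSegment γ x y) :
    IsGeodSegment (fun t => γ (dist x y - t)) y x := by
  obtain ⟨h0, h1, hd⟩ := h
  have hyx : dist y x = dist x y := dist_comm y x
  refine ⟨by simpa using h1, ?_, ?_⟩
  · rw [hyx]; simpa using h0
  · intro s hs t ht
    rw [hyx] at hs ht
    simp only []
    rw [hd _ ⟨by linarith [hs.2], by linarith [hs.1]⟩ _ ⟨by linarith [ht.2], by linarith [ht.1]⟩]
    rw [abs_sub_comm]; congr 1; ring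

lemma clamp_lip {R : ℝ} (s t : ℝ) : |min (max s 0) R - min (max t 0) R| ≤ |s - t| := by
  refine (abs_min_sub_min_le_max _ _ _ _).trans (max_le ?_ (by simp [abs_nonneg]))
  refine (abs_max_sub_max_le_max _ _ _ _).trans (max_le le_rfl (by simp [abs_nonneg]))

end Helpers

lemma vert {X : Type*} [MetricSpace X] [ProperSpace X]
    (hgeo : GeodesicMS X) {δ : ℝ} (hδ : 0 < δ) (hhyp : DeltaHyp X δ)
    {B : X → ℝ} (hB : IsBusemann B) (x x' : X) :
    ∃ γ γ' : ℝ → X, γ 0 = x ∧ γ' 0 = x' ∧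
      (∀ s t : ℝ, dist (γ s) (γ t) ≤ |s - t|) ∧
      (∀ s t : ℝ, dist (γ' s) (γ' t) ≤ |s - t|) ∧
      (∀ t : ℝ, 0 ≤ t → B (γ t) = B x - t) ∧
      (∀ t : ℝ, 0 ≤ t → B (γ' t) = B x' - t) ∧
      (∀ t t' : ℝ, 0 ≤ t → 0 ≤ t' → dist x x' + 2 * δ < t + t' →
        B x - t = B x' - t' → dist (γ t) (γ' t') ≤ 2 * δ) := by
  classical
  obtain ⟨σ, hray, hlim⟩ := hB
  obtain ⟨U, hU⟩ := Ultrafilter.exists_le (Filter.atTop : Filter ℕ)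
  have hBlip : ∀ z w : X, B z ≤ B w + dist z w := busemann_le_add hlim
  have hBcont : Continuous B := (LipschitzWith.of_le_add fun a b => hBlip a b).continuous
  set R : X → ℕ → ℝ := fun z n => dist z (σ n) with hRdef
  have hg : ∀ (z : X) (n : ℕ), IsGeodSegment (Classical.choose (hgeo z (σ n))) z (σ n) :=
    fun z n => Classical.choose_spec (hgeo z (σ n))
  set g : X → ℕ → ℝ → X :=
    fun z n t => Classical.choose (hgeo z (σ n)) (min (max t 0) (R z n)) with hgdef
  have hclmem : ∀ (z : X) (n : ℕ) (t : ℝ), min (max t 0) (R z n) ∈ Icc 0 (dist z (σ n)) :=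
    fun z n t => ⟨le_min (le_max_right t 0) dist_nonneg, min_le_right _ _⟩
  have hgdist : ∀ (z : X) (n : ℕ) (s t : ℝ),
      dist (g z n s) (g z n t) = |min (max s 0) (R z n) - min (max t 0) (R z n)| :=
    fun z n s t => (hg z n).2.2 _ (hclmem z n s) _ (hclmem z n t)
  have hgx : ∀ (z : X) (n : ℕ) (t : ℝ), dist z (g z n t) = min (max t 0) (R z n) := by
    intro z n t
    have h0 : (0 : ℝ) ∈ Icc (0 : ℝ) (dist z (σ n)) := ⟨le_rfl, dist_nonneg⟩
    have h1 := (hg z n).2.2 0 h0 _ (hclmem z n t)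
    rw [(hg z n).1] at h1
    simp only [hgdef]
    rw [h1, abs_sub_comm, sub_zero, abs_of_nonneg (hclmem z n t).1]
  have hlimpt : ∀ (z : X) (t : ℝ), ∃ a : X, Filter.Tendsto (fun n => g z n t) U (nhds a) := by
    intro z t
    have hmem : ∀ n : ℕ, g z n t ∈ closedBall z (max t 0) := by
      intro n
      rw [mem_closedBall, dist_comm, hgx z n t]
      exact min_le_left _ _
    obtain ⟨a, -, ha⟩ := (isCompact_closedBall z (max t 0)).ultrafilter_le_nhds
      (U.map fun n => g z n t)
      (by
        rw [Ultrafilter.coe_map, Filter.le_principal_iff]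
        exact Filter.mem_map.mpr (Filter.univ_mem' hmem))
    refine ⟨a, ?_⟩
    rw [Filter.Tendsto, ← Ultrafilter.coe_map]
    exact ha
  choose Γ hΓ using hlimpt
  have hRlarge : ∀ (c : ℝ) (z : X), ∀ᶠ n : ℕ in (U : Filter ℕ), c ≤ R z n := by
    intro c z
    apply hU
    have h1 : ∀ᶠ n : ℕ in Filter.atTop, c + dist (σ 0) z ≤ (n : ℝ) :=
      tendsto_natCast_atTop_atTop.eventually_ge_atTop _
    filter_upwards [h1] with n hn
    have hd : dist (σ 0) (σ n) = (n : ℝ) := by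
      rw [hray 0 Set.self_mem_Ici n (Set.mem_Ici.mpr (Nat.cast_nonneg n))]
      simp
    have := dist_triangle (σ 0) z (σ n)
    simp only [hRdef]
    linarith
  have hGeq : ∀ (z : X) (t : ℝ), 0 ≤ t → ∀ n : ℕ, t ≤ R z n →
      g z n t = Classical.choose (hgeo z (σ n)) t := by
    intro z t ht n htR
    rw [hgdef]
    simp only []
    rw [max_eq_left ht, min_eq_left htR]
  -- basic properties of Γ
  have hΓ0 : ∀ z : X, Γ z 0 = z := by
    intro z
    refine tendsto_nhds_unique (hΓ z 0) ?_
    have : (fun n : ℕ => g z n 0) = fun _ => z := by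
      funext n
      have : min (max (0:ℝ) 0) (R z n) = 0 := by
        rw [max_self, min_eq_left dist_nonneg]
      rw [hgdef]; simp only []; rw [this]
      exact (hg z n).1
    rw [this]
    exact tendsto_const_nhds
  have hΓlip : ∀ (z : X) (s t : ℝ), dist (Γ z s) (Γ z t) ≤ |s - t| := by
    intro z s t
    refine le_of_tendsto ((hΓ z s).dist (hΓ z t)) (Filter.Eventually.of_forall fun n => ?_)
    rw [hgdist z n s t]
    exact clamp_lip s t
  have hΓB : ∀ (z : X) (t : ℝ), 0 ≤ t → B (Γ z t) = B z - t := by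
    intro z t ht
    have h1 : Filter.Tendsto (fun n => B (g z n t)) U (nhds (B (Γ z t))) :=
      (hBcont.tendsto _).comp (hΓ z t)
    refine tendsto_nhds_unique h1 ?_
    have h2 : Filter.Tendsto (fun n : ℕ => (R z n - n) - t) (U : Filter ℕ) (nhds (B z - t)) := by
      have h3 : Filter.Tendsto (fun n : ℕ => dist z (σ n) - n) Filter.atTop (nhds (B z)) :=
        (hlim z).comp tendsto_natCast_atTop_atTop
      exact (h3.sub_const t).mono_left hU
    refine tendsto_of_tendsto_of_tendsto_of_le_of_le' tendsto_const_nhds h2 ?_ ?_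
    · refine Filter.Eventually.of_forall fun n => ?_
      have := hBlip z (g z n t)
      have h4 : dist z (g z n t) ≤ t := by
        rw [hgx z n t]
        exact (min_le_left _ _).trans (by rw [max_eq_left ht])
      linarith
    · filter_upwards [hRlarge t z] with n htR
      rw [hGeq z t ht n htR]
      have h5 : dist (Classical.choose (hgeo z (σ n)) t) (σ n) = R z n - t := by
        have := (hg z n).2.2 t ⟨ht, htR⟩ (dist z (σ n)) ⟨dist_nonneg, le_rfl⟩
        rw [(hg z n).2.1] at this
        rw [this, abs_of_nonpos (by simp only [hRdef] at htR; linarith)]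
        simp only [hRdef]; ring
      have := busemann_antitone hray hlim (Classical.choose (hgeo z (σ n)) t)
        (Nat.cast_nonneg n)
      rw [h5] at this
      linarith
  -- the 2δ estimate
  refine ⟨Γ x, Γ x', hΓ0 x, hΓ0 x', hΓlip x, hΓlip x', hΓB x, hΓB x', ?_⟩
  intro t t' ht ht' hsum hlev
  obtain ⟨c, hc⟩ := hgeo x x'
  set d := dist x x' with hd
  have key : ∀ ε : ℝ, 0 < ε → dist (Γ x t) (Γ x' t') ≤ 2 * δ + ε := by
    intro ε hε
    set ε' := min ε ((t + t' - (d + 2 * δ)) / 2) with hε'def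
    have hε'pos : 0 < ε' := lt_min hε (by linarith)
    have hε'lt : ε' < t + t' - (d + 2 * δ) := (min_le_right _ _).trans_lt (by linarith)
    have hε'le : ε' ≤ ε := min_le_left _ _
    have hevd : ∀ᶠ n : ℕ in (U : Filter ℕ), |(R x' n - R x n) - (B x' - B x)| ≤ ε' := by
      apply hU
      have h1 : Filter.Tendsto (fun n : ℕ => R x' n - R x n) Filter.atTop
          (nhds (B x' - B x)) := by
        have hx1 : Filter.Tendsto (fun n : ℕ => dist x (σ n) - n) Filter.atTop (nhds (B x)) :=
          (hlim x).comp tendsto_natCast_atTop_atTop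
        have hx2 : Filter.Tendsto (fun n : ℕ => dist x' (σ n) - n) Filter.atTop (nhds (B x')) :=
          (hlim x').comp tendsto_natCast_atTop_atTop
        have := hx2.sub hx1
        refine this.congr fun n => ?_
        simp only [hRdef]; ring
      obtain ⟨N, hN⟩ := (Metric.tendsto_atTop.mp h1) ε' hε'pos
      filter_upwards [Filter.eventually_ge_atTop N] with n hn
      have := hN n hn
      rw [Real.dist_eq] at this
      linarith
    have hev : ∀ᶠ n : ℕ in (U : Filter ℕ),
        dist (g x n t) (g x' n t') ≤ 2 * δ + ε' := by
      filter_upwards [hRlarge t x, hRlarge t' x', hevd] with n htR ht'R hdR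
      have hgx1 := hg x n
      have hgx2 := hg x' n
      have hrev := geod_reverse hgx2
      obtain ⟨w, hw, hdw⟩ := hhyp x (σ n) x' (Classical.choose (hgeo x (σ n))) c _
        hgx1 hc hrev t ⟨ht, htR⟩
      rw [hGeq x t ht n htR, hGeq x' t' ht' n ht'R]
      have hxgt : dist x (Classical.choose (hgeo x (σ n)) t) = t := by
        have := hgx1.2.2 0 ⟨le_rfl, dist_nonneg⟩ t ⟨ht, htR⟩
        rw [hgx1.1] at this
        rw [this, abs_sub_comm, sub_zero, abs_of_nonneg ht]
      have hgtσ : dist (Classical.choose (hgeo x (σ n)) t) (σ n) = R x n - t := by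
        have := hgx1.2.2 t ⟨ht, htR⟩ (dist x (σ n)) ⟨dist_nonneg, le_rfl⟩
        rw [hgx1.2.1] at this
        rw [this, abs_of_nonpos (by simp only [hRdef] at htR ⊢; linarith)]
        simp only [hRdef]; ring
      have hlev2 : B x' - B x = t' - t := by linarith
      have habs := abs_le.mp hdR
      rcases hw with ⟨u, hu, rfl⟩ | ⟨u, hu, rfl⟩
      · exfalso
        have hxu : dist x (c u) = u := by
          have := hc.2.2 0 ⟨le_rfl, dist_nonneg⟩ u hu
          rw [hc.1] at this
          rw [this, abs_sub_comm, sub_zero, abs_of_nonneg hu.1]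
        have hux' : dist (c u) x' = d - u := by
          have := hc.2.2 u hu (dist x x') ⟨dist_nonneg, le_rfl⟩
          rw [hc.2.1] at this
          rw [this, abs_of_nonpos (by linarith [hu.2]), ← hd]; ring
        have h5 : t - δ ≤ u := by
          have h6 := dist_triangle x (c u) (Classical.choose (hgeo x (σ n)) t)
          rw [hxu, dist_comm (c u)] at h6
          rw [← hxgt]
          linarith
        have h7 : R x' n ≤ (d - u) + (δ + (R x n - t)) := by
          have h8 := dist_triangle x' (c u) (σ n)
          have h9 := dist_triangle (c u) (Classical.choose (hgeo x (σ n)) t) (σ n)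
          rw [dist_comm x' (c u), hux'] at h8
          rw [dist_comm (c u) (Classical.choose (hgeo x (σ n)) t), hgtσ] at h9
          have : R x' n = dist x' (σ n) := rfl
          linarith
        linarith [habs.1]
      · -- w on the side from σ n to x'
        simp only [] at hdw
        have huI : u ∈ Icc 0 (R x' n) := by
          rwa [dist_comm (σ n) x'] at hu
        set s := dist x' (σ n) - u with hsdef
        have hsI : s ∈ Icc 0 (dist x' (σ n)) := ⟨by linarith [huI.2], by linarith [huI.1]⟩
        have hsσ : dist (Classical.choose (hgeo x' (σ n)) s) (σ n) = R x' n - s := by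
          have := hgx2.2.2 s hsI (dist x' (σ n)) ⟨dist_nonneg, le_rfl⟩
          rw [hgx2.2.1] at this
          rw [this, abs_of_nonpos (by linarith [hsI.2])]
          simp only [hRdef]; ring
        have h8 : |(R x n - t) - (R x' n - s)| ≤ δ := by
          have h9 := abs_dist_sub_le (Classical.choose (hgeo x (σ n)) t)
            (Classical.choose (hgeo x' (σ n)) s) (σ n)
          rw [hgtσ, hsσ] at h9
          exact h9.trans hdw
        have habs8 := abs_le.mp h8
        have h10 : dist (Classical.choose (hgeo x' (σ n)) s)
            (Classical.choose (hgeo x' (σ n)) t') = |s - t'| :=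
          hgx2.2.2 s hsI t' ⟨ht', ht'R⟩
        have h11 : |s - t'| ≤ δ + ε' := by
          rw [abs_le]
          constructor <;> linarith
        calc dist (Classical.choose (hgeo x (σ n)) t) (Classical.choose (hgeo x' (σ n)) t')
            ≤ dist (Classical.choose (hgeo x (σ n)) t) (Classical.choose (hgeo x' (σ n)) s)
              + dist (Classical.choose (hgeo x' (σ n)) s)
                (Classical.choose (hgeo x' (σ n)) t') := dist_triangle _ _ _
          _ ≤ δ + (δ + ε') := add_le_add hdw (by rw [h10]; exact h11)
          _ = 2 * δ + ε' := by ring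
    have := le_of_tendsto ((hΓ x t).dist (hΓ x' t')) hev
    linarith
  by_contra hcon
  push_neg at hcon
  have := key ((dist (Γ x t) (Γ x' t') - 2 * δ) / 2) (by linarith)
  linarith

lemma evar_le {Z : Type*} [MetricSpace Z] {P : ℝ → Z} {K : ℝ} (hK : 0 ≤ K)
    (h : ∀ u v : ℝ, dist (P u) (P v) ≤ K * |u - v|) {a b : ℝ} (hab : a ≤ b) :
    eVariationOn P (Icc a b) ≤ ENNReal.ofReal (K * (b - a)) := by
  have hlip : LipschitzWith (Real.toNNReal K) P := by
    apply LipschitzWith.of_dist_le_mul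
    intro u v
    rw [Real.coe_toNNReal K hK, Real.dist_eq]
    exact h u v
  have h1 := (hlip.lipschitzOnWith (s := Set.univ)).comp_eVariationOn_le
    (g := (id : ℝ → ℝ)) (s := Icc a b) (fun x _ => Set.mem_univ _)
  have h2 : eVariationOn (id : ℝ → ℝ) (Icc a b) ≤ ENNReal.ofReal (b - a) := by
    have h3 := MonotoneOn.eVariationOn_le (f := (id : ℝ → ℝ)) (s := Icc a b)
      (fun u _ v _ huv => huv) (left_mem_Icc.mpr hab) (right_mem_Icc.mpr hab)
    simpa [Set.inter_self] using h3
  calc eVariationOn P (Icc a b) = eVariationOn (P ∘ id) (Icc a b) := rfl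
    _ ≤ (Real.toNNReal K : ℝ≥0∞) * eVariationOn id (Icc a b) := h1
    _ ≤ (Real.toNNReal K : ℝ≥0∞) * ENNReal.ofReal (b - a) := mul_le_mul_right h2 _
    _ = ENNReal.ofReal K * ENNReal.ofReal (b - a) := rfl
    _ = ENNReal.ofReal (K * (b - a)) := (ENNReal.ofReal_mul hK).symm

lemma glue_dist_le {Z : Type*} [MetricSpace Z] {f g : ℝ → Z} {K b : ℝ}
    (hfg : f b = g b)
    (hf : ∀ u v, dist (f u) (f v) ≤ K * |u - v|)
    (hg : ∀ u v, dist (g u) (g v) ≤ K * |u - v|) :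
    ∀ u v, dist (if u ≤ b then f u else g u) (if v ≤ b then f v else g v) ≤ K * |u - v| := by
  have key : ∀ u v, u ≤ b → ¬v ≤ b → dist (f u) (g v) ≤ K * |u - v| := by
    intro u v hu hv
    push_neg at hv
    have h1 : dist (f u) (g v) ≤ dist (f u) (f b) + dist (g b) (g v) := by
      have h0 := dist_triangle (f u) (f b) (g v)
      rw [show dist (f b) (g v) = dist (g b) (g v) from by rw [hfg]] at h0
      exact h0
    have h2 := hf u b
    have h3 := hg b v
    have e1 : |u - b| = b - u := by rw [abs_of_nonpos (by linarith)]; ring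
    have e2 : |b - v| = v - b := by rw [abs_of_nonpos (by linarith)]; ring
    have e3 : |u - v| = v - u := by rw [abs_of_nonpos (by linarith)]; ring
    rw [e1] at h2; rw [e2] at h3; rw [e3]
    linarith
  intro u v
  split_ifs with hu hv hv
  · exact hf u v
  · exact key u v hu hv
  · rw [dist_comm, abs_sub_comm]; exact key v u hv hu
  · exact hg u v

lemma deltaHyp_mono {X : Type*} [MetricSpace X] {δ δ' : ℝ} (h : DeltaHyp X δ) (hle : δ ≤ δ') :
    DeltaHyp X δ' := by
  intro x y z a b c ha hb hc s hs
  obtain ⟨w, hw, hd⟩ := h x y z a b c ha hb hc s hs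
  exact ⟨w, hw, hd.trans hle⟩

noncomputable def clq (a : ℝ) : ℝ := min (max a 0) 1

lemma clq_mem (a : ℝ) : clq a ∈ Icc (0:ℝ) 1 :=
  ⟨le_min (le_max_right a 0) zero_le_one, min_le_right _ _⟩

lemma clq_lip (a b : ℝ) : |clq a - clq b| ≤ |a - b| := clamp_lip a b

lemma clq_mul_mem {L : ℝ} (hL : 0 ≤ L) (a : ℝ) : clq a * L ∈ Icc 0 L :=
  ⟨mul_nonneg (clq_mem a).1 hL, by
    calc clq a * L ≤ 1 * L := mul_le_mul_of_nonneg_right (clq_mem a).2 hL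
      _ = L := one_mul L⟩

lemma clq_mul_lip {L : ℝ} (hL : 0 ≤ L) (a b : ℝ) :
    |clq a * L - clq b * L| ≤ |a - b| * L := by
  rw [← sub_mul, abs_mul, abs_of_nonneg hL]
  exact mul_le_mul_of_nonneg_right (clq_lip a b) hL

lemma clq_of_nonpos {a : ℝ} (ha : a ≤ 0) : clq a = 0 := by
  rw [clq, max_eq_right ha, min_eq_left zero_le_one]

lemma clq_of_one_le {a : ℝ} (ha : 1 ≤ a) : clq a = 1 := by
  rw [clq, max_eq_left (by linarith), min_eq_right ha]

lemma upper_key {X₁ X₂ : Type*} [MetricSpace X₁] [MetricSpace X₂]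
    [ProperSpace X₁] [ProperSpace X₂]
    (hgeo₁ : GeodesicMS X₁) (hgeo₂ : GeodesicMS X₂)
    {δ : ℝ} (hδ : 0 < δ) (hhyp₁ : DeltaHyp X₁ δ) (hhyp₂ : DeltaHyp X₂ δ)
    {B₁ : X₁ → ℝ} {B₂ : X₂ → ℝ} (hB₁ : IsBusemann B₁) (hB₂ : IsBusemann B₂)
    (p p' : {q : X₁ × X₂ // B₁ q.1 = B₂ q.2}) :
    intDist p p' ≤ ENNReal.ofReal (dist p p' + 10 * δ) := by
  classical
  obtain ⟨⟨x₁, x₂⟩, hp0⟩ := p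
  obtain ⟨⟨x₁', x₂'⟩, hp0'⟩ := p'
  have hp : B₁ x₁ = B₂ x₂ := hp0
  have hp' : B₁ x₁' = B₂ x₂' := hp0'
  obtain ⟨γ₁, γ₁', hγ₁0, hγ₁'0, hγ₁lip, hγ₁'lip, hγ₁B, hγ₁'B, hγ₁close⟩ :=
    vert hgeo₁ hδ hhyp₁ hB₁ x₁ x₁'
  obtain ⟨γ₂, γ₂', hγ₂0, hγ₂'0, hγ₂lip, hγ₂'lip, hγ₂B, hγ₂'B, hγ₂close⟩ :=
    vert hgeo₂ hδ hhyp₂ hB₂ x₂ x₂'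
  set A := B₁ x₁ with hA
  set A' := B₁ x₁' with hA'
  set ℓ := min ((A + A' - dist x₁ x₁') / 2) ((A + A' - dist x₂ x₂') / 2) - 3 * δ with hℓdef
  set T := A - ℓ with hTdef
  set T' := A' - ℓ with hT'def
  clear_value A A' ℓ T T'
  have hq0 : B₁ ((x₁, x₂) : X₁ × X₂).1 = B₂ ((x₁, x₂) : X₁ × X₂).2 := by
    show B₁ x₁ = B₂ x₂
    rw [← hA]; exact hp
  have hq0' : B₁ ((x₁', x₂') : X₁ × X₂).1 = B₂ ((x₁', x₂') : X₁ × X₂).2 := by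
    show B₁ x₁' = B₂ x₂'
    rw [← hA']; exact hp'
  -- basic inequalities
  have habs1 := abs_le.mp (busemann_lip hB₁ x₁ x₁')
  have habs2 : |A - A'| ≤ dist x₂ x₂' := by
    rw [hp, hp']
    exact busemann_lip hB₂ x₂ x₂'
  have habs2' := abs_le.mp habs2
  have hmin1 : ℓ ≤ (A + A' - dist x₁ x₁') / 2 - 3 * δ := by
    rw [hℓdef]; have := min_le_left ((A + A' - dist x₁ x₁') / 2) ((A + A' - dist x₂ x₂') / 2)
    linarith
  have hmin2 : ℓ ≤ (A + A' - dist x₂ x₂') / 2 - 3 * δ := by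
    rw [hℓdef]; have := min_le_right ((A + A' - dist x₁ x₁') / 2) ((A + A' - dist x₂ x₂') / 2)
    linarith
  have hTa : 3 * δ ≤ T := by
    rw [hTdef]
    have h1 := habs1.1
    have h2 := habs2'.1
    rcases le_total ((A + A' - dist x₁ x₁') / 2) ((A + A' - dist x₂ x₂') / 2) with hc | hc
    · rw [hℓdef, min_eq_left hc]; linarith
    · rw [hℓdef, min_eq_right hc]; linarith
  have hT'a : 3 * δ ≤ T' := by
    rw [hT'def]
    have h1 := habs1.2
    have h2 := habs2'.2
    rcases le_total ((A + A' - dist x₁ x₁') / 2) ((A + A' - dist x₂ x₂') / 2) with hc | hc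
    · rw [hℓdef, min_eq_left hc]; linarith
    · rw [hℓdef, min_eq_right hc]; linarith
  have hT0 : 0 ≤ T := by linarith
  have hT'0 : 0 ≤ T' := by linarith
  have hsum1 : dist x₁ x₁' + 2 * δ < T + T' := by
    rw [hTdef, hT'def]; linarith
  have hsum2 : dist x₂ x₂' + 2 * δ < T + T' := by
    rw [hTdef, hT'def]; linarith
  have hlev1 : A - T = A' - T' := by rw [hTdef, hT'def]; ring
  have hlev2 : B₂ x₂ - T = B₂ x₂' - T' := by rw [← hp, ← hp']; exact hlev1
  have hbot1 : dist (γ₁ T) (γ₁' T') ≤ 2 * δ := hγ₁close T T' hT0 hT'0 hsum1 hlev1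
  have hbot2 : dist (γ₂ T) (γ₂' T') ≤ 2 * δ := hγ₂close T T' hT0 hT'0 hsum2 hlev2
  -- geodesics at the bottom
  obtain ⟨c₁, hc₁⟩ := hgeo₁ (γ₁ T) (γ₁' T')
  obtain ⟨c₂, hc₂⟩ := hgeo₂ (γ₂ T) (γ₂' T')
  set L₁ := dist (γ₁ T) (γ₁' T') with hL₁def
  set L₂ := dist (γ₂ T) (γ₂' T') with hL₂def
  clear_value L₁ L₂
  have hL₁0 : 0 ≤ L₁ := by rw [hL₁def]; exact dist_nonneg
  have hL₂0 : 0 ≤ L₂ := by rw [hL₂def]; exact dist_nonneg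
  have hc₁0 : c₁ 0 = γ₁ T := hc₁.1
  have hc₁L : c₁ L₁ = γ₁' T' := by rw [hL₁def]; exact hc₁.2.1
  have hc₁seg : ∀ s ∈ Icc (0:ℝ) L₁, ∀ t ∈ Icc (0:ℝ) L₁, dist (c₁ s) (c₁ t) = |s - t| := by
    intro s hs t ht
    rw [hL₁def] at hs ht
    exact hc₁.2.2 s hs t ht
  have hc₂0 : c₂ 0 = γ₂ T := hc₂.1
  have hc₂L : c₂ L₂ = γ₂' T' := by rw [hL₂def]; exact hc₂.2.1
  have hc₂seg : ∀ s ∈ Icc (0:ℝ) L₂, ∀ t ∈ Icc (0:ℝ) L₂, dist (c₂ s) (c₂ t) = |s - t| := by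
    intro s hs t ht
    rw [hL₂def] at hs ht
    exact hc₂.2.2 s hs t ht
  have hc₁dist : ∀ v ∈ Icc 0 L₁, dist (γ₁ T) (c₁ v) = v := by
    intro v hv
    have h1 := hc₁seg 0 ⟨le_rfl, hL₁0⟩ v hv
    rw [hc₁0] at h1
    rw [h1, abs_sub_comm, sub_zero, abs_of_nonneg hv.1]
  have hc₂dist : ∀ v ∈ Icc 0 L₂, dist (γ₂ T) (c₂ v) = v := by
    intro v hv
    have h1 := hc₂seg 0 ⟨le_rfl, hL₂0⟩ v hv
    rw [hc₂0] at h1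
    rw [h1, abs_sub_comm, sub_zero, abs_of_nonneg hv.1]
  have hγ₁T : B₁ (γ₁ T) = A - T := hγ₁B T hT0
  have hγ₂T : B₂ (γ₂ T) = B₂ x₂ - T := hγ₂B T hT0
  have hγ₁'T' : B₁ (γ₁' T') = A' - T' := hγ₁'B T' hT'0
  have hγ₂'T' : B₂ (γ₂' T') = B₂ x₂' - T' := hγ₂'B T' hT'0
  have hc₁B : ∀ v ∈ Icc 0 L₁, B₁ (c₁ v) ≤ A - δ := by
    intro v hv
    have h1 := abs_le.mp (busemann_lip hB₁ (c₁ v) (γ₁ T))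
    rw [dist_comm (c₁ v) (γ₁ T), hc₁dist v hv] at h1
    have h2 := hv.2
    linarith [h1.2, hbot1]
  have hc₂B : ∀ v ∈ Icc 0 L₂, B₂ (c₂ v) ≤ A' - δ := by
    intro v hv
    have h1 := abs_le.mp (busemann_lip hB₂ (c₂ v) (γ₂ T))
    rw [dist_comm (c₂ v) (γ₂ T), hc₂dist v hv] at h1
    have h2 := hv.2
    have h3 : B₂ x₂ = A := hp.symm
    -- B₂ (c₂ v) ≤ B₂ (γ₂ T) + v = A - T + v ≤ A - T + 2δ = ℓ + 2δ ≤ A' - δ  (T' ≥ 3δ)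
    have h4 : A - T = A' - T' := hlev1
    linarith [h1.2, hbot2]
  -- membership proofs for the four pieces
  have hm1 : ∀ u : ℝ, B₁ (γ₁ (clq (4 * u) * T)) = B₂ (γ₂ (clq (4 * u) * T)) := by
    intro u
    have hs := (clq_mul_mem hT0 (4 * u)).1
    rw [hγ₁B _ hs, hγ₂B _ hs, ← hp]
  have hm2 : ∀ u : ℝ,
      B₁ (c₁ (clq (4 * u - 1) * L₁)) =
        B₂ (γ₂ (A - B₁ (c₁ (clq (4 * u - 1) * L₁)))) := by
    intro u
    have hv := clq_mul_mem hL₁0 (4 * u - 1)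
    have h1 := hc₁B _ hv
    have h2 : 0 ≤ A - B₁ (c₁ (clq (4 * u - 1) * L₁)) := by linarith
    rw [hγ₂B _ h2, ← hp]
    ring
  have hm3 : ∀ u : ℝ,
      B₁ (γ₁' (A' - B₂ (c₂ (clq (4 * u - 2) * L₂)))) =
        B₂ (c₂ (clq (4 * u - 2) * L₂)) := by
    intro u
    have hv := clq_mul_mem hL₂0 (4 * u - 2)
    have h1 := hc₂B _ hv
    have h2 : 0 ≤ A' - B₂ (c₂ (clq (4 * u - 2) * L₂)) := by linarith
    rw [hγ₁'B _ h2]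
    ring
  have hm4 : ∀ u : ℝ, B₁ (γ₁' (clq (4 - 4 * u) * T')) = B₂ (γ₂' (clq (4 - 4 * u) * T')) := by
    intro u
    have hs := (clq_mul_mem hT'0 (4 - 4 * u)).1
    rw [hγ₁'B _ hs, hγ₂'B _ hs, ← hp']
  -- the four pieces
  set P1 : ℝ → {q : X₁ × X₂ // B₁ q.1 = B₂ q.2} :=
    fun u => ⟨(γ₁ (clq (4 * u) * T), γ₂ (clq (4 * u) * T)), hm1 u⟩ with hP1def
  set P2 : ℝ → {q : X₁ × X₂ // B₁ q.1 = B₂ q.2} :=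
    fun u => ⟨(c₁ (clq (4 * u - 1) * L₁),
      γ₂ (A - B₁ (c₁ (clq (4 * u - 1) * L₁)))), hm2 u⟩ with hP2def
  set P3 : ℝ → {q : X₁ × X₂ // B₁ q.1 = B₂ q.2} :=
    fun u => ⟨(γ₁' (A' - B₂ (c₂ (clq (4 * u - 2) * L₂))),
      c₂ (clq (4 * u - 2) * L₂)), hm3 u⟩ with hP3def
  set P4 : ℝ → {q : X₁ × X₂ // B₁ q.1 = B₂ q.2} :=
    fun u => ⟨(γ₁' (clq (4 - 4 * u) * T'), γ₂' (clq (4 - 4 * u) * T')), hm4 u⟩ with hP4def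
  have hYdist : ∀ q q' : {q : X₁ × X₂ // B₁ q.1 = B₂ q.2},
      dist q q' = max (dist q.val.1 q'.val.1) (dist q.val.2 q'.val.2) := by
    intro q q'
    rw [Subtype.dist_eq, Prod.dist_eq]
  have habs4 : ∀ u v : ℝ, |4 * u - 4 * v| = 4 * |u - v| := by
    intro u v
    rw [show 4 * u - 4 * v = 4 * (u - v) by ring, abs_mul, abs_of_nonneg (by norm_num : (0:ℝ) ≤ 4)]
  -- Lipschitz bounds
  have hP1lip : ∀ u v : ℝ, dist (P1 u) (P1 v) ≤ 4 * T * |u - v| := by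
    intro u v
    rw [hYdist]
    simp only [hP1def]
    have hb : |clq (4 * u) * T - clq (4 * v) * T| ≤ 4 * T * |u - v| := by
      have := clq_mul_lip hT0 (4 * u) (4 * v)
      rw [habs4] at this
      calc |clq (4 * u) * T - clq (4 * v) * T| ≤ 4 * |u - v| * T := this
        _ = 4 * T * |u - v| := by ring
    exact max_le ((hγ₁lip _ _).trans hb) ((hγ₂lip _ _).trans hb)
  have hP2lip : ∀ u v : ℝ, dist (P2 u) (P2 v) ≤ 4 * L₁ * |u - v| := by
    intro u v
    rw [hYdist]
    simp only [hP2def]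
    have hcd : dist (c₁ (clq (4 * u - 1) * L₁)) (c₁ (clq (4 * v - 1) * L₁))
        = |clq (4 * u - 1) * L₁ - clq (4 * v - 1) * L₁| :=
      hc₁seg _ (clq_mul_mem hL₁0 _) _ (clq_mul_mem hL₁0 _)
    have hb : |clq (4 * u - 1) * L₁ - clq (4 * v - 1) * L₁| ≤ 4 * L₁ * |u - v| := by
      have h1 := clq_mul_lip hL₁0 (4 * u - 1) (4 * v - 1)
      have h2 : |4 * u - 1 - (4 * v - 1)| = 4 * |u - v| := by
        rw [show 4 * u - 1 - (4 * v - 1) = 4 * (u - v) by ring, abs_mul,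
          abs_of_nonneg (by norm_num : (0:ℝ) ≤ 4)]
      rw [h2] at h1
      calc _ ≤ 4 * |u - v| * L₁ := h1
        _ = 4 * L₁ * |u - v| := by ring
    refine max_le (by rw [hcd]; exact hb) ?_
    calc dist (γ₂ (A - B₁ (c₁ (clq (4 * u - 1) * L₁))))
          (γ₂ (A - B₁ (c₁ (clq (4 * v - 1) * L₁))))
        ≤ |A - B₁ (c₁ (clq (4 * u - 1) * L₁)) - (A - B₁ (c₁ (clq (4 * v - 1) * L₁)))| :=
          hγ₂lip _ _
      _ = |B₁ (c₁ (clq (4 * v - 1) * L₁)) - B₁ (c₁ (clq (4 * u - 1) * L₁))| := by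
          rw [show A - B₁ (c₁ (clq (4 * u - 1) * L₁)) - (A - B₁ (c₁ (clq (4 * v - 1) * L₁)))
            = -(B₁ (c₁ (clq (4 * u - 1) * L₁)) - B₁ (c₁ (clq (4 * v - 1) * L₁))) by ring,
            abs_neg, abs_sub_comm]
      _ ≤ dist (c₁ (clq (4 * v - 1) * L₁)) (c₁ (clq (4 * u - 1) * L₁)) :=
          busemann_lip hB₁ _ _
      _ = |clq (4 * u - 1) * L₁ - clq (4 * v - 1) * L₁| := by rw [dist_comm, hcd]
      _ ≤ 4 * L₁ * |u - v| := hb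
  have hP3lip : ∀ u v : ℝ, dist (P3 u) (P3 v) ≤ 4 * L₂ * |u - v| := by
    intro u v
    rw [hYdist]
    simp only [hP3def]
    have hcd : dist (c₂ (clq (4 * u - 2) * L₂)) (c₂ (clq (4 * v - 2) * L₂))
        = |clq (4 * u - 2) * L₂ - clq (4 * v - 2) * L₂| :=
      hc₂seg _ (clq_mul_mem hL₂0 _) _ (clq_mul_mem hL₂0 _)
    have hb : |clq (4 * u - 2) * L₂ - clq (4 * v - 2) * L₂| ≤ 4 * L₂ * |u - v| := by
      have h1 := clq_mul_lip hL₂0 (4 * u - 2) (4 * v - 2)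
      have h2 : |4 * u - 2 - (4 * v - 2)| = 4 * |u - v| := by
        rw [show 4 * u - 2 - (4 * v - 2) = 4 * (u - v) by ring, abs_mul,
          abs_of_nonneg (by norm_num : (0:ℝ) ≤ 4)]
      rw [h2] at h1
      calc _ ≤ 4 * |u - v| * L₂ := h1
        _ = 4 * L₂ * |u - v| := by ring
    refine max_le ?_ (by rw [hcd]; exact hb)
    calc dist (γ₁' (A' - B₂ (c₂ (clq (4 * u - 2) * L₂))))
          (γ₁' (A' - B₂ (c₂ (clq (4 * v - 2) * L₂))))
        ≤ |A' - B₂ (c₂ (clq (4 * u - 2) * L₂)) - (A' - B₂ (c₂ (clq (4 * v - 2) * L₂)))| :=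
          hγ₁'lip _ _
      _ = |B₂ (c₂ (clq (4 * v - 2) * L₂)) - B₂ (c₂ (clq (4 * u - 2) * L₂))| := by
          rw [show A' - B₂ (c₂ (clq (4 * u - 2) * L₂)) - (A' - B₂ (c₂ (clq (4 * v - 2) * L₂)))
            = -(B₂ (c₂ (clq (4 * u - 2) * L₂)) - B₂ (c₂ (clq (4 * v - 2) * L₂))) by ring,
            abs_neg, abs_sub_comm]
      _ ≤ dist (c₂ (clq (4 * v - 2) * L₂)) (c₂ (clq (4 * u - 2) * L₂)) :=
          busemann_lip hB₂ _ _
      _ = |clq (4 * u - 2) * L₂ - clq (4 * v - 2) * L₂| := by rw [dist_comm, hcd]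
      _ ≤ 4 * L₂ * |u - v| := hb
  have hP4lip : ∀ u v : ℝ, dist (P4 u) (P4 v) ≤ 4 * T' * |u - v| := by
    intro u v
    rw [hYdist]
    simp only [hP4def]
    have hb : |clq (4 - 4 * u) * T' - clq (4 - 4 * v) * T'| ≤ 4 * T' * |u - v| := by
      have h1 := clq_mul_lip hT'0 (4 - 4 * u) (4 - 4 * v)
      have h2 : |4 - 4 * u - (4 - 4 * v)| = 4 * |u - v| := by
        rw [show 4 - 4 * u - (4 - 4 * v) = -(4 * (u - v)) by ring, abs_neg, abs_mul,
          abs_of_nonneg (by norm_num : (0:ℝ) ≤ 4)]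
      rw [h2] at h1
      calc _ ≤ 4 * |u - v| * T' := h1
        _ = 4 * T' * |u - v| := by ring
    exact max_le ((hγ₁'lip _ _).trans hb) ((hγ₂'lip _ _).trans hb)
  -- breakpoint equalities
  have e12 : P1 (1/4) = P2 (1/4) := by
    simp only [hP1def, hP2def]
    refine Subtype.ext (Prod.ext ?_ ?_)
    · show γ₁ (clq (4 * (1/4)) * T) = c₁ (clq (4 * (1/4) - 1) * L₁)
      rw [show (4 * (1/4 : ℝ) - 1) = 0 by norm_num, show (4 * (1/4 : ℝ)) = 1 by norm_num,
        clq_of_one_le le_rfl, clq_of_nonpos le_rfl, one_mul, zero_mul, hc₁0]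
    · show γ₂ (clq (4 * (1/4)) * T) = γ₂ (A - B₁ (c₁ (clq (4 * (1/4) - 1) * L₁)))
      rw [show (4 * (1/4 : ℝ) - 1) = 0 by norm_num, show (4 * (1/4 : ℝ)) = 1 by norm_num,
        clq_of_one_le le_rfl, clq_of_nonpos le_rfl, one_mul, zero_mul, hc₁0, hγ₁T]
      congr 1
      ring
  have e23 : P2 (1/2) = P3 (1/2) := by
    simp only [hP2def, hP3def]
    refine Subtype.ext (Prod.ext ?_ ?_)
    · show c₁ (clq (4 * (1/2) - 1) * L₁) = γ₁' (A' - B₂ (c₂ (clq (4 * (1/2) - 2) * L₂)))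
      rw [show (4 * (1/2 : ℝ) - 1) = 1 by norm_num, show (4 * (1/2 : ℝ) - 2) = 0 by norm_num,
        clq_of_one_le le_rfl, clq_of_nonpos le_rfl, one_mul, zero_mul, hc₂0, hγ₂T,
        ← hp, hc₁L]
      congr 1
      rw [hTdef, hT'def]; ring
    · show γ₂ (A - B₁ (c₁ (clq (4 * (1/2) - 1) * L₁))) = c₂ (clq (4 * (1/2) - 2) * L₂)
      rw [show (4 * (1/2 : ℝ) - 1) = 1 by norm_num, show (4 * (1/2 : ℝ) - 2) = 0 by norm_num,
        clq_of_one_le le_rfl, clq_of_nonpos le_rfl, one_mul, zero_mul, hc₂0, hc₁L,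
        hγ₁'T']
      congr 1
      rw [hTdef, hT'def]; ring
  have e34 : P3 (3/4) = P4 (3/4) := by
    simp only [hP3def, hP4def]
    refine Subtype.ext (Prod.ext ?_ ?_)
    · show γ₁' (A' - B₂ (c₂ (clq (4 * (3/4) - 2) * L₂))) = γ₁' (clq (4 - 4 * (3/4)) * T')
      rw [show (4 * (3/4 : ℝ) - 2) = 1 by norm_num, show (4 - 4 * (3/4 : ℝ)) = 1 by norm_num,
        clq_of_one_le le_rfl, one_mul, one_mul, hc₂L, hγ₂'T', ← hp']
      congr 1
      ring
    · show c₂ (clq (4 * (3/4) - 2) * L₂) = γ₂' (clq (4 - 4 * (3/4)) * T')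
      rw [show (4 * (3/4 : ℝ) - 2) = 1 by norm_num, show (4 - 4 * (3/4 : ℝ)) = 1 by norm_num,
        clq_of_one_le le_rfl, one_mul, one_mul, hc₂L]
  -- the glued path
  set F : ℝ → {q : X₁ × X₂ // B₁ q.1 = B₂ q.2} :=
    fun u => if u ≤ 1/4 then P1 u else
      (fun u => if u ≤ 1/2 then P2 u else
        (fun u => if u ≤ 3/4 then P3 u else P4 u) u) u with hFdef
  set K := 4 * T + 4 * L₁ + 4 * L₂ + 4 * T' with hKdef
  clear_value K
  have hK0 : 0 ≤ K := by rw [hKdef]; linarith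
  have hweak : ∀ (Q : ℝ → {q : X₁ × X₂ // B₁ q.1 = B₂ q.2}) (C : ℝ), 0 ≤ C → C ≤ K →
      (∀ u v : ℝ, dist (Q u) (Q v) ≤ C * |u - v|) →
      (∀ u v : ℝ, dist (Q u) (Q v) ≤ K * |u - v|) := by
    intro Q C _ hCK hQ u v
    exact (hQ u v).trans (mul_le_mul_of_nonneg_right hCK (abs_nonneg _))
  have hP1K := hweak P1 (4 * T) (by linarith) (by rw [hKdef]; linarith) hP1lip
  have hP2K := hweak P2 (4 * L₁) (by linarith) (by rw [hKdef]; linarith) hP2lip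
  have hP3K := hweak P3 (4 * L₂) (by linarith) (by rw [hKdef]; linarith) hP3lip
  have hP4K := hweak P4 (4 * T') (by linarith) (by rw [hKdef]; linarith) hP4lip
  have hF34K : ∀ u v : ℝ,
      dist ((fun u => if u ≤ 3/4 then P3 u else P4 u) u)
        ((fun u => if u ≤ 3/4 then P3 u else P4 u) v) ≤ K * |u - v| :=
    glue_dist_le e34 hP3K hP4K
  have hF234K : ∀ u v : ℝ,
      dist ((fun u => if u ≤ 1/2 then P2 u else
          (fun u => if u ≤ 3/4 then P3 u else P4 u) u) u)
        ((fun u => if u ≤ 1/2 then P2 u else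
          (fun u => if u ≤ 3/4 then P3 u else P4 u) u) v) ≤ K * |u - v| := by
    refine glue_dist_le ?_ hP2K hF34K
    show P2 (1/2) = (fun u => if u ≤ (3:ℝ)/4 then P3 u else P4 u) (1/2)
    simp only []
    rw [if_pos (by norm_num : (1/2 : ℝ) ≤ 3/4)]
    exact e23
  have hFlip : ∀ u v : ℝ, dist (F u) (F v) ≤ K * |u - v| := by
    intro u v
    rw [hFdef]
    refine glue_dist_le ?_ hP1K hF234K u v
    show P1 (1/4) = (fun u => if u ≤ (1:ℝ)/2 then P2 u else
      (fun u => if u ≤ (3:ℝ)/4 then P3 u else P4 u) u) (1/4)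
    simp only []
    rw [if_pos (by norm_num : (1/4 : ℝ) ≤ 1/2)]
    exact e12
  have hFcont : Continuous F := by
    refine (LipschitzWith.of_dist_le_mul (K := Real.toNNReal K) fun u v => ?_).continuous
    rw [Real.coe_toNNReal K hK0, Real.dist_eq]
    exact hFlip u v
  -- endpoints
  have hF0 : F 0 = ⟨(x₁, x₂), hq0⟩ := by
    rw [hFdef]
    simp only []
    rw [if_pos (by norm_num : (0:ℝ) ≤ 1/4)]
    simp only [hP1def]
    refine Subtype.ext (Prod.ext ?_ ?_)
    · show γ₁ (clq (4 * 0) * T) = x₁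
      rw [mul_zero, clq_of_nonpos le_rfl, zero_mul, hγ₁0]
    · show γ₂ (clq (4 * 0) * T) = x₂
      rw [mul_zero, clq_of_nonpos le_rfl, zero_mul, hγ₂0]
  have hF1 : F 1 = ⟨(x₁', x₂'), hq0'⟩ := by
    rw [hFdef]
    simp only []
    rw [if_neg (by norm_num : ¬((1:ℝ) ≤ 1/4)), if_neg (by norm_num : ¬((1:ℝ) ≤ 1/2)),
      if_neg (by norm_num : ¬((1:ℝ) ≤ 3/4))]
    simp only [hP4def]
    refine Subtype.ext (Prod.ext ?_ ?_)
    · show γ₁' (clq (4 - 4 * 1) * T') = x₁'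
      rw [show (4 - 4 * (1:ℝ)) = 0 by norm_num, clq_of_nonpos le_rfl, zero_mul, hγ₁'0]
    · show γ₂' (clq (4 - 4 * 1) * T') = x₂'
      rw [show (4 - 4 * (1:ℝ)) = 0 by norm_num, clq_of_nonpos le_rfl, zero_mul, hγ₂'0]
  -- the interior distance is at most the variation of F
  have hstep1 : intDist (⟨(x₁, x₂), hq0⟩ : {q : X₁ × X₂ // B₁ q.1 = B₂ q.2})
      ⟨(x₁', x₂'), hq0'⟩ ≤ eVariationOn F (Icc 0 1) := by
    unfold intDist
    exact iInf_le_of_le F (iInf_le_of_le hFcont.continuousOn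
      (iInf_le_of_le hF0 (iInf_le_of_le hF1 le_rfl)))
  -- split into quarters
  have e1 := eVariationOn.Icc_add_Icc F (s := Set.univ) (a := (0:ℝ)) (b := 1/4) (c := 1)
    (by norm_num) (by norm_num) (Set.mem_univ _)
  have e2 := eVariationOn.Icc_add_Icc F (s := Set.univ) (a := (1/4:ℝ)) (b := 1/2) (c := 1)
    (by norm_num) (by norm_num) (Set.mem_univ _)
  have e3 := eVariationOn.Icc_add_Icc F (s := Set.univ) (a := (1/2:ℝ)) (b := 3/4) (c := 1)
    (by norm_num) (by norm_num) (Set.mem_univ _)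
  simp only [Set.univ_inter] at e1 e2 e3
  -- quarter congruences
  have hq1 : eVariationOn F (Icc (0:ℝ) (1/4)) = eVariationOn P1 (Icc (0:ℝ) (1/4)) := by
    refine eVariationOn.eq_of_eqOn fun u hu => ?_
    rw [hFdef]
    simp only []
    rw [if_pos hu.2]
  have hq2 : eVariationOn F (Icc (1/4:ℝ) (1/2)) = eVariationOn P2 (Icc (1/4:ℝ) (1/2)) := by
    refine eVariationOn.eq_of_eqOn fun u hu => ?_
    rw [hFdef]
    simp only []
    by_cases h : u ≤ 1/4
    · have hu4 : u = 1/4 := le_antisymm h hu.1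
      rw [if_pos h, hu4, e12]
    · rw [if_neg h, if_pos hu.2]
  have hq3 : eVariationOn F (Icc (1/2:ℝ) (3/4)) = eVariationOn P3 (Icc (1/2:ℝ) (3/4)) := by
    refine eVariationOn.eq_of_eqOn fun u hu => ?_
    rw [hFdef]
    simp only []
    rw [if_neg (by linarith [hu.1] : ¬(u ≤ 1/4))]
    by_cases h : u ≤ 1/2
    · have hu2 : u = 1/2 := le_antisymm h hu.1
      rw [if_pos h, hu2, e23]
    · rw [if_neg h, if_pos hu.2]
  have hq4 : eVariationOn F (Icc (3/4:ℝ) 1) = eVariationOn P4 (Icc (3/4:ℝ) 1) := by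
    refine eVariationOn.eq_of_eqOn fun u hu => ?_
    rw [hFdef]
    simp only []
    rw [if_neg (by linarith [hu.1] : ¬(u ≤ 1/4)), if_neg (by linarith [hu.1] : ¬(u ≤ 1/2))]
    by_cases h : u ≤ 3/4
    · have hu3 : u = 3/4 := le_antisymm h hu.1
      rw [if_pos h, hu3, e34]
    · rw [if_neg h]
  -- quarter bounds
  have hb1 : eVariationOn P1 (Icc (0:ℝ) (1/4)) ≤ ENNReal.ofReal T := by
    have := evar_le (by linarith : (0:ℝ) ≤ 4 * T) hP1lip (by norm_num : (0:ℝ) ≤ 1/4)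
    rwa [show 4 * T * (1/4 - 0 : ℝ) = T by ring] at this
  have hb2 : eVariationOn P2 (Icc (1/4:ℝ) (1/2)) ≤ ENNReal.ofReal L₁ := by
    have := evar_le (by linarith : (0:ℝ) ≤ 4 * L₁) hP2lip (by norm_num : (1/4:ℝ) ≤ 1/2)
    rwa [show 4 * L₁ * (1/2 - 1/4 : ℝ) = L₁ by ring] at this
  have hb3 : eVariationOn P3 (Icc (1/2:ℝ) (3/4)) ≤ ENNReal.ofReal L₂ := by
    have := evar_le (by linarith : (0:ℝ) ≤ 4 * L₂) hP3lip (by norm_num : (1/2:ℝ) ≤ 3/4)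
    rwa [show 4 * L₂ * (3/4 - 1/2 : ℝ) = L₂ by ring] at this
  have hb4 : eVariationOn P4 (Icc (3/4:ℝ) 1) ≤ ENNReal.ofReal T' := by
    have := evar_le (by linarith : (0:ℝ) ≤ 4 * T') hP4lip (by norm_num : (3/4:ℝ) ≤ 1)
    rwa [show 4 * T' * (1 - 3/4 : ℝ) = T' by ring] at this
  -- total bound
  have htot : eVariationOn F (Icc (0:ℝ) 1) ≤
      ENNReal.ofReal (T + (L₁ + (L₂ + T'))) := by
    rw [← e1, ← e2, ← e3, hq1, hq2, hq3, hq4]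
    rw [ENNReal.ofReal_add hT0 (by positivity), ENNReal.ofReal_add hL₁0 (by positivity),
      ENNReal.ofReal_add hL₂0 hT'0]
    exact add_le_add hb1 (add_le_add hb2 (add_le_add hb3 hb4))
  -- distance computation
  have hdY : dist (⟨(x₁, x₂), hq0⟩ : {q : X₁ × X₂ // B₁ q.1 = B₂ q.2}) ⟨(x₁', x₂'), hq0'⟩
      = max (dist x₁ x₁') (dist x₂ x₂') := hYdist _ _
  have hTT' : T + T' = max (dist x₁ x₁') (dist x₂ x₂') + 6 * δ := by
    rcases le_total (dist x₁ x₁') (dist x₂ x₂') with hc | hc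
    · rw [max_eq_right hc, hTdef, hT'def, hℓdef,
        min_eq_right (by linarith : (A + A' - dist x₂ x₂') / 2 ≤ (A + A' - dist x₁ x₁') / 2)]
      ring
    · rw [max_eq_left hc, hTdef, hT'def, hℓdef,
        min_eq_left (by linarith : (A + A' - dist x₁ x₁') / 2 ≤ (A + A' - dist x₂ x₂') / 2)]
      ring
  refine (hstep1.trans htot).trans (ENNReal.ofReal_le_ofReal ?_)
  rw [hdY]
  have hL₁2 : L₁ ≤ 2 * δ := hbot1
  have hL₂2 : L₂ ≤ 2 * δ := hbot2
  linarith

/-- Proposition 1: For all `p, p' ∈ Y` one has `d_m(p,p') ≤ d(p,p') ≤ d_m(p,p') + 20δ`,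
where `d` is the interior metric on `Y` induced by the maximum metric `d_m`. -/
theorem stmt10 {X₁ X₂ : Type*} [MetricSpace X₁] [MetricSpace X₂]
    [ProperSpace X₁] [ProperSpace X₂]
    (hgeo₁ : GeodesicMS X₁) (hgeo₂ : GeodesicMS X₂)
    (δ : ℝ) (hδ : 0 ≤ δ) (hhyp₁ : DeltaHyp X₁ δ) (hhyp₂ : DeltaHyp X₂ δ)
    (B₁ : X₁ → ℝ) (B₂ : X₂ → ℝ) (hB₁ : IsBusemann B₁) (hB₂ : IsBusemann B₂)
    (p p' : {q : X₁ × X₂ // B₁ q.1 = B₂ q.2}) :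
    ENNReal.ofReal (dist p p') ≤ intDist p p' ∧
    intDist p p' ≤ ENNReal.ofReal (dist p p' + 20 * δ) := by
  constructor
  · unfold intDist
    refine le_iInf fun c => le_iInf fun hc => le_iInf fun h0 => le_iInf fun h1 => ?_
    rw [← h0, ← h1, ← edist_dist]
    exact eVariationOn.edist_le c ⟨le_rfl, zero_le_one⟩ ⟨zero_le_one, le_rfl⟩
  · refine ENNReal.le_of_forall_pos_le_add fun ε hε _ => ?_
    have hε' : (0 : ℝ) < (ε : ℝ) := NNReal.coe_pos.mpr hε
    have hδ' : 0 < δ + (ε : ℝ) / 10 := by linarith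
    have h1 := upper_key hgeo₁ hgeo₂ hδ'
      (deltaHyp_mono hhyp₁ (by linarith)) (deltaHyp_mono hhyp₂ (by linarith))
      hB₁ hB₂ p p'
    refine h1.trans ?_
    calc ENNReal.ofReal (dist p p' + 10 * (δ + (ε : ℝ) / 10))
        ≤ ENNReal.ofReal ((dist p p' + 20 * δ) + (ε : ℝ)) :=
          ENNReal.ofReal_le_ofReal (by linarith)
      _ ≤ ENNReal.ofReal (dist p p' + 20 * δ) + ENNReal.ofReal (ε : ℝ) :=
          ENNReal.ofReal_add_le
      _ = ENNReal.ofReal (dist p p' + 20 * δ) + ε := by rw [ENNReal.ofReal_coe_nnreal]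
end

section
/- With the notation of the normalized setup for geodesics in Y, writing ᾱᵢ = σᵢ|_{[0,t₀]} and β̄ᵢ = σᵢ|_{[t₀,d(p,p')]} for the components of σ split at t₀, one has |L(ᾱᵢ) − a| ≤ 50δ and |L(β̄ᵢ) − b| ≤ 50δ for i = 1,2, where L denotes length. -/
open Set Metric Filter
open scoped ENNReal NNReal

/-!
The length `L` of `σ` exceeds `d₁(p₁, p₁') = a + b` by `O(δ)`: a competitor path runs down the
`Bᵢ`-rays from `p`, crosses over in `X₁` and then in `X₂` at a depth where the rays from `p` and
`p'` have come `12δ`-close (rays towards the same Busemann point fellow-travel past the branch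
points `a`, `b`, by the four-point condition with one point at infinity), and climbs back up the
rays to `p'`. A `1`-Lipschitz path from `p₁` to `p₁'` this short passes `O(δ)`-close to
`γ_{p₁p₁'}(a)`, hence so does `σ₁(t₀)`; there `B₁ ≈ B₁(p₁) - a`, so both coordinates of `σ(t₀)` are
at distance `≈ a` from `p` and `≈ b` from `p'`. As `σ` is `1`-Lipschitz in each coordinate, the
lengths of the four pieces are squeezed between these distances and `t₀`, `L - t₀`.
-/

section IntDist

variable {Z : Type*} [MetricSpace Z]

theorem edist_le_intDist (x y : Z) : edist x y ≤ intDist x y :=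
  le_iInf fun c => le_iInf fun _ => le_iInf fun h0 => le_iInf fun h1 =>
    h0 ▸ h1 ▸ eVariationOn.edist_le c (left_mem_Icc.2 zero_le_one)
      (right_mem_Icc.2 zero_le_one)

theorem intDist_le_eVariationOn {c : ℝ → Z} (hc : ContinuousOn c (Icc 0 1)) :
    intDist (c 0) (c 1) ≤ eVariationOn c (Icc 0 1) :=
  iInf_le_of_le c <| iInf_le_of_le hc <| iInf_le_of_le rfl <| iInf_le_of_le rfl le_rfl

theorem intDist_le_of_lipschitzWith {f : ℝ → Z} {K : ℝ≥0} (hf : LipschitzWith K f) (u v : ℝ) :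
    intDist (f u) (f v) ≤ K * edist u v := by
  have hφ := hf.comp (lipschitzWith_lineMap (𝕜 := ℝ) u v)
  have h := intDist_le_eVariationOn hφ.continuous.continuousOn
  simp only [Function.comp_apply, AffineMap.lineMap_apply_zero,
    AffineMap.lineMap_apply_one] at h
  calc intDist (f u) (f v) ≤ eVariationOn (f ∘ AffineMap.lineMap u v) (Icc 0 1) := h
    _ ≤ (K * nndist u v : ℝ≥0) * eVariationOn id (Icc (0 : ℝ) 1) :=
      hφ.lipschitzOnWith.comp_eVariationOn_le (mapsTo_univ _ _)
    _ = K * edist u v := by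
      rw [eVariationOn_id_Icc, sub_zero, ENNReal.ofReal_one, mul_one, ENNReal.coe_mul,
        coe_nnreal_ennreal_nndist]

theorem intDist_le_add {c₁ c₂ : ℝ → Z} (hc₁ : ContinuousOn c₁ (Icc 0 1))
    (hc₂ : ContinuousOn c₂ (Icc 0 1)) (h : c₁ 1 = c₂ 0) :
    intDist (c₁ 0) (c₂ 1) ≤ eVariationOn c₁ (Icc 0 1) + eVariationOn c₂ (Icc 0 1) := by
  set c : ℝ → Z := fun t => if t ≤ 1 / 2 then c₁ (2 * t) else c₂ (2 * t + -1)
  have hφ₁ : (fun t : ℝ => 2 * t) '' Icc 0 (1 / 2) = Icc 0 1 := by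
    rw [image_mul_left_Icc zero_le_two (by norm_num)]; norm_num
  have hφ₂ : (fun t : ℝ => 2 * t + -1) '' Icc (1 / 2) 1 = Icc 0 1 := by
    rw [image_affine_Icc' two_pos]; norm_num
  have e₁ : EqOn c (c₁ ∘ fun t => 2 * t) (Icc 0 (1 / 2)) := fun t ht => if_pos ht.2
  have e₂ : EqOn c (c₂ ∘ fun t => 2 * t + -1) (Icc (1 / 2) 1) := fun t ht => by
    rcases ht.1.eq_or_lt with rfl | hlt
    · norm_num [c, h]
    · simp only [c, Function.comp_apply, if_neg (not_le.2 hlt)]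
  have hcont : ContinuousOn c (Icc 0 1) := by
    rw [← Icc_union_Icc_eq_Icc (by norm_num : (0 : ℝ) ≤ 1 / 2) (by norm_num : (1 / 2 : ℝ) ≤ 1)]
    refine ContinuousOn.union_of_isClosed ?_ ?_ isClosed_Icc isClosed_Icc
    · exact (hc₁.comp (by fun_prop) (hφ₁ ▸ mapsTo_image _ _)).congr e₁
    · exact (hc₂.comp (by fun_prop) (hφ₂ ▸ mapsTo_image _ _)).congr e₂
  have hmono₁ : MonotoneOn (fun t : ℝ => 2 * t) (Icc 0 (1 / 2)) :=
    fun s _ t _ hst => by linarith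
  have hmono₂ : MonotoneOn (fun t : ℝ => 2 * t + -1) (Icc (1 / 2) 1) :=
    fun s _ t _ hst => by linarith
  calc intDist (c₁ 0) (c₂ 1) = intDist (c 0) (c 1) := by norm_num [c]
    _ ≤ eVariationOn c (Icc 0 1) := intDist_le_eVariationOn hcont
    _ = eVariationOn c (Icc 0 (1 / 2)) + eVariationOn c (Icc (1 / 2) 1) := by
      simpa using (eVariationOn.Icc_add_Icc c (s := univ) (by norm_num : (0 : ℝ) ≤ 1 / 2)
        (by norm_num : (1 / 2 : ℝ) ≤ 1) (mem_univ _)).symm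
    _ = eVariationOn c₁ (Icc 0 1) + eVariationOn c₂ (Icc 0 1) := by
      rw [eVariationOn.eq_of_eqOn e₁, eVariationOn.eq_of_eqOn e₂,
        eVariationOn.comp_eq_of_monotoneOn _ _ hmono₁,
        eVariationOn.comp_eq_of_monotoneOn _ _ hmono₂, hφ₁, hφ₂]

theorem intDist_triangle (x y z : Z) : intDist x z ≤ intDist x y + intDist y z :=
  ENNReal.le_iInf_add_iInf fun _ _ => ENNReal.le_iInf_add_iInf fun hc₁ hc₂ =>
    ENNReal.le_iInf_add_iInf fun h₁0 h₂0 => ENNReal.le_iInf_add_iInf fun h₁1 h₂1 =>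
      h₁0 ▸ h₂1 ▸ intDist_le_add hc₁ hc₂ (h₁1.trans h₂0.symm)

theorem LipschitzWith.intDist_le {Z' : Type*} [MetricSpace Z'] {f : Z → Z'}
    (hf : LipschitzWith 1 f) (x y : Z) : intDist (f x) (f y) ≤ intDist x y :=
  le_iInf fun c => le_iInf fun hc => le_iInf fun h0 => le_iInf fun h1 => by
    calc intDist (f x) (f y) = intDist ((f ∘ c) 0) ((f ∘ c) 1) := by simp [h0, h1]
      _ ≤ eVariationOn (f ∘ c) (Icc 0 1) :=
        intDist_le_eVariationOn (hf.continuous.comp_continuousOn hc)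
      _ ≤ (1 : ℝ≥0) * eVariationOn c (Icc 0 1) :=
        hf.lipschitzOnWith.comp_eVariationOn_le (mapsTo_univ _ _)
      _ = eVariationOn c (Icc 0 1) := by rw [ENNReal.coe_one, one_mul]

theorem lipschitzOnWith_of_intDist_le {σ : ℝ → Z} {s : Set ℝ}
    (h : ∀ x ∈ s, ∀ y ∈ s, intDist (σ x) (σ y) ≤ edist x y) : LipschitzOnWith 1 σ s :=
  fun x hx y hy => by simpa using (edist_le_intDist _ _).trans (h x hx y hy)

end IntDist

theorem LipschitzOnWith.ofReal_le_eVariationOn_le {E : Type*} [PseudoMetricSpace E]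
    {f : ℝ → E} {u v c r : ℝ} (hf : LipschitzOnWith 1 f (Icc u v)) (huv : u ≤ v)
    (hlow : c - r ≤ dist (f u) (f v)) (hup : v - u ≤ c + r) :
    ENNReal.ofReal (c - r) ≤ eVariationOn f (Icc u v) ∧
      eVariationOn f (Icc u v) ≤ ENNReal.ofReal (c + r) := by
  constructor
  · calc ENNReal.ofReal (c - r) ≤ edist (f u) (f v) := by
          rw [edist_dist]; exact ENNReal.ofReal_le_ofReal hlow
      _ ≤ _ := eVariationOn.edist_le f (left_mem_Icc.2 huv) (right_mem_Icc.2 huv)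
  · calc eVariationOn f (Icc u v) ≤ (1 : ℝ≥0) * eVariationOn id (Icc u v) :=
          hf.comp_eVariationOn_le (mapsTo_id _)
      _ ≤ ENNReal.ofReal (c + r) := by
          rw [eVariationOn_id_Icc, ENNReal.coe_one, one_mul]
          exact ENNReal.ofReal_le_ofReal hup

section Hyperbolic

variable {X : Type*} [MetricSpace X] {δ : ℝ} {B : X → ℝ}

theorem gp_comm (x y w : X) : gp x y w = gp y x w := by
  simp only [gp, dist_comm x y, add_comm]

theorem gp_nonneg (x y w : X) : 0 ≤ gp x y w := by
  have := dist_triangle x w y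
  simp only [gp, dist_comm w y] at *
  linarith

theorem gpB_add_gpB (x y : X) : gpB B x y + gpB B y x = dist x y := by
  simp only [gpB, dist_comm y x]
  ring

theorem gpB_sub_gpB (x y : X) : gpB B x y - gpB B y x = B x - B y := by
  simp only [gpB, dist_comm y x]
  ring

theorem IsBusemann.sub_le_dist (hB : IsBusemann B) (x y : X) : B x - B y ≤ dist x y := by
  obtain ⟨γ, -, hlim⟩ := hB
  refine le_of_tendsto ((hlim x).sub (hlim y)) (Eventually.of_forall fun t => ?_)
  linarith [dist_triangle x y (γ t)]

theorem IsBusemann.gpB_nonneg (hB : IsBusemann B) (x y : X) : 0 ≤ gpB B x y := by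
  have := hB.sub_le_dist y x
  simp only [gpB, dist_comm y x] at *
  linarith

theorem tendsto_gp_busemann {γ : ℝ → X}
    (hlim : ∀ x, Tendsto (fun t => dist x (γ t) - t) atTop (nhds (B x))) (x y : X) :
    Tendsto (fun t => gp (γ t) y x) atTop (nhds (gpB B x y)) := by
  have h := (((hlim x).add_const (dist y x)).sub (hlim y)).div_const 2
  convert h using 2 with t
  · simp only [gp, dist_comm (γ t)]
    ring
  · simp only [gpB, dist_comm y x]
    ring

theorem IsGeodSegment.dist_left {g : ℝ → X} {x y : X} (hg : IsGeodSegment g x y) {t : ℝ}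
    (ht : t ∈ Icc 0 (dist x y)) : dist x (g t) = t := by
  rw [← hg.1, hg.2.2 0 ⟨le_rfl, dist_nonneg⟩ t ht, zero_sub, abs_neg, abs_of_nonneg ht.1]

theorem IsGeodSegment.dist_right {g : ℝ → X} {x y : X} (hg : IsGeodSegment g x y) {t : ℝ}
    (ht : t ∈ Icc 0 (dist x y)) : dist (g t) y = dist x y - t := by
  conv_lhs => rw [← hg.2.1]
  rw [hg.2.2 t ht _ ⟨dist_nonneg, le_rfl⟩, abs_sub_comm, abs_of_nonneg (by linarith [ht.2])]

theorem IsBRay.busemann_apply {γ : ℝ → X} (hγ : IsBRay B γ) {t : ℝ} (ht : 0 ≤ t) :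
    B (γ t) = B (γ 0) - t :=
  hγ.2 t ht

theorem IsBRay.dist_zero {γ : ℝ → X} (hγ : IsBRay B γ) {t : ℝ} (ht : 0 ≤ t) :
    dist (γ 0) (γ t) = t := by
  rw [hγ.1 0 self_mem_Ici t ht, zero_sub, abs_neg, abs_of_nonneg ht]

theorem IsBRay.dist_add {γ : ℝ → X} (hγ : IsBRay B γ) {s h : ℝ} (hs : 0 ≤ s) (hh : 0 ≤ h) :
    dist (γ s) (γ (s + h)) = h := by
  rw [hγ.1 s hs _ (by simp only [mem_Ici]; linarith), sub_add_cancel_left, abs_neg,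
    abs_of_nonneg hh]

theorem IsBRay.gpB_add {γ : ℝ → X} (hγ : IsBRay B γ) {s h : ℝ} (hs : 0 ≤ s) (hh : 0 ≤ h) :
    gpB B (γ s) (γ (s + h)) = h := by
  rw [gpB, hγ.dist_add hs hh, hγ.busemann_apply hs,
    hγ.busemann_apply (t := s + h) (by linarith)]
  ring

theorem DeltaHyp.dist_le_of_le_gp (hgeo : GeodesicMS X) (hhyp : DeltaHyp X δ) {g : ℝ → X}
    {w y : X} (hg : IsGeodSegment g w y) (x : X) {t : ℝ} (ht : t ∈ Icc 0 (dist w y))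
    (htx : t ≤ gp x y w) : dist x (g t) ≤ dist w x - t + 2 * δ := by
  obtain ⟨gwx, hgwx⟩ := hgeo w x
  obtain ⟨gyx, hgyx⟩ := hgeo y x
  obtain ⟨u, hu, hdu⟩ := hhyp w y x g gwx gyx hg hgwx hgyx t ht
  have hwg := hg.dist_left ht
  have hgy := hg.dist_right ht
  have hxu := dist_triangle x u (g t)
  rw [dist_comm (g t)] at hdu
  rcases hu with ⟨τ, hτ, rfl⟩ | ⟨τ, hτ, rfl⟩
  · have := dist_triangle w (gwx τ) (g t)
    have := hgwx.dist_left hτ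
    have := hgwx.dist_right hτ
    rw [dist_comm (gwx τ) x] at this
    linarith
  · have := dist_triangle y (gyx τ) (g t)
    have := hgyx.dist_left hτ
    have := hgyx.dist_right hτ
    rw [gp, dist_comm x w, dist_comm y w] at htx
    rw [dist_comm (gyx τ) x, dist_comm y x] at this
    rw [dist_comm (g t) y] at hgy
    linarith

theorem DeltaHyp.four_point (hgeo : GeodesicMS X) (hhyp : DeltaHyp X δ) (x y z w : X) :
    min (gp x y w) (gp y z w) - 2 * δ ≤ gp x z w := by
  set t := min (gp x y w) (gp y z w)
  have ht : t ∈ Icc 0 (dist w y) := by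
    refine ⟨le_min (gp_nonneg _ _ _) (gp_nonneg _ _ _), (min_le_left _ _).trans ?_⟩
    have := dist_triangle x y w
    simp only [gp, dist_comm y w] at *
    linarith
  obtain ⟨g, hg⟩ := hgeo w y
  have hx := hhyp.dist_le_of_le_gp hgeo hg x ht (min_le_left _ _)
  have hz := hhyp.dist_le_of_le_gp hgeo hg z ht ((min_le_right _ _).trans_eq (gp_comm _ _ _))
  have := dist_triangle x (g t) z
  simp only [gp, dist_comm w, dist_comm (g t) z] at *
  linarith

theorem DeltaHyp.four_point_busemann (hgeo : GeodesicMS X) (hhyp : DeltaHyp X δ)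
    (hB : IsBusemann B) (x z w : X) :
    min (gpB B w x) (gpB B w z) - 2 * δ ≤ gp x z w := by
  obtain ⟨γ, -, hlim⟩ := hB
  refine le_of_tendsto' (((tendsto_gp_busemann hlim w x).min
    (tendsto_gp_busemann hlim w z)).sub_const _) fun t => ?_
  simpa only [gp_comm (γ t) x] using hhyp.four_point hgeo x (γ t) z w

theorem DeltaHyp.four_point_busemann' (hgeo : GeodesicMS X) (hhyp : DeltaHyp X δ)
    (hB : IsBusemann B) (x y w : X) :
    min (gp x y w) (gpB B w y) - 2 * δ ≤ gpB B w x := by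
  obtain ⟨γ, -, hlim⟩ := hB
  refine le_of_tendsto_of_tendsto' ((tendsto_const_nhds.min
    (tendsto_gp_busemann hlim w y)).sub_const _) (tendsto_gp_busemann hlim w x) fun t => ?_
  rw [gp_comm (γ t) y, gp_comm (γ t) x]
  exact hhyp.four_point hgeo x y (γ t) w

theorem DeltaHyp.dist_bRay_add_le (hgeo : GeodesicMS X) (hhyp : DeltaHyp X δ)
    (hB : IsBusemann B) {γ γ' : ℝ → X} (hγ : IsBRay B γ) (hγ' : IsBRay B γ') {s s' h : ℝ}
    (hs : 0 ≤ s) (hs' : 0 ≤ s') (hh : 0 ≤ h) (hlevel : B (γ s) = B (γ' s')) :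
    dist (γ (s + h)) (γ' (s' + h)) ≤ dist (γ s) (γ' s') + 4 * δ := by
  have hfp := hhyp.four_point_busemann hgeo hB (γ (s + h)) (γ' (s' + h)) (γ' s')
  have hgpB : h ≤ gpB B (γ' s') (γ (s + h)) := by
    have := hB.sub_le_dist (γ' s') (γ (s + h))
    rw [gpB, ← hlevel, hγ.busemann_apply (t := s + h) (by linarith), hγ.busemann_apply hs] at *
    linarith
  rw [hγ'.gpB_add hs' hh, min_eq_right hgpB, gp, dist_comm (γ' (s' + h)), hγ'.dist_add hs' hh]
    at hfp
  have := dist_triangle (γ (s + h)) (γ s) (γ' s')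
  rw [dist_comm (γ (s + h)) (γ s), hγ.dist_add hs hh] at this
  linarith

theorem DeltaHyp.dist_bRay_gpB_le (hgeo : GeodesicMS X) (hhyp : DeltaHyp X δ)
    (hB : IsBusemann B) {γ γ' : ℝ → X} (hγ : IsBRay B γ) (hγ' : IsBRay B γ') {x x' : X}
    (hγ0 : γ 0 = x) (hγ'0 : γ' 0 = x') :
    dist (γ (gpB B x x')) (γ' (gpB B x' x)) ≤ 8 * δ := by
  set a := gpB B x x'
  set b := gpB B x' x
  have ha : 0 ≤ a := hB.gpB_nonneg x x'
  have hb : 0 ≤ b := hB.gpB_nonneg x' x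
  have hab : a + b = dist x x' := gpB_add_gpB x x'
  have hBab : a - b = B x - B x' := gpB_sub_gpB x x'
  have hγ'b : gpB B x' (γ' b) = b := by simpa [hγ'0] using hγ'.gpB_add le_rfl hb
  have hγa : gpB B x (γ a) = a := by simpa [hγ0] using hγ.gpB_add le_rfl ha
  have hBγ'b : B (γ' b) = B x' - b := by rw [hγ'.busemann_apply hb, hγ'0]
  have hdγ'b : dist (γ' b) x' = b := by rw [dist_comm, ← hγ'0, hγ'.dist_zero hb]
  have hdγa : dist (γ a) x = a := by rw [dist_comm, ← hγ0, hγ.dist_zero ha]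
  -- the point `γ' b` is at distance `a` from `x`, up to `4δ`
  have hfp₁ := hhyp.four_point_busemann hgeo hB x (γ' b) x'
  rw [show gpB B x' x = b from rfl, hγ'b, min_self, gp, hdγ'b] at hfp₁
  have hlow := hB.sub_le_dist x (γ' b)
  have hfp₂ := hhyp.four_point_busemann hgeo hB (γ a) (γ' b) x
  rw [hγa, min_eq_left (by rw [gpB, hBγ'b]; linarith), gp, hdγa, dist_comm (γ' b)] at hfp₂
  linarith

theorem DeltaHyp.dist_bRay_le (hgeo : GeodesicMS X) (hhyp : DeltaHyp X δ)
    (hB : IsBusemann B) {γ γ' : ℝ → X} (hγ : IsBRay B γ) (hγ' : IsBRay B γ') {x x' : X}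
    (hγ0 : γ 0 = x) (hγ'0 : γ' 0 = x') {A A' : ℝ} (hA : gpB B x x' ≤ A)
    (hlevel : B x - A = B x' - A') : dist (γ A) (γ' A') ≤ 12 * δ := by
  have hBab : gpB B x x' - gpB B x' x = B x - B x' := gpB_sub_gpB x x'
  have hcorner := hhyp.dist_bRay_gpB_le hgeo hB hγ hγ' hγ0 hγ'0
  have hpush := hhyp.dist_bRay_add_le hgeo hB hγ hγ' (hB.gpB_nonneg x x')
    (hB.gpB_nonneg x' x) (sub_nonneg.2 hA) (by
      rw [hγ.busemann_apply (hB.gpB_nonneg x x'), hγ'.busemann_apply (hB.gpB_nonneg x' x),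
        hγ0, hγ'0]
      linarith)
  rw [add_sub_cancel, show gpB B x' x + (A - gpB B x x') = A' by linarith] at hpush
  linarith

theorem DeltaHyp.busemann_le_of_isGeodSegment (hgeo : GeodesicMS X) (hhyp : DeltaHyp X δ)
    (hB : IsBusemann B) {g : ℝ → X} {x y : X} (hg : IsGeodSegment g x y) :
    B (g (gpB B x y)) ≤ B x - gpB B x y + 4 * δ := by
  set a := gpB B x y
  have ha : a ∈ Icc 0 (dist x y) :=
    ⟨hB.gpB_nonneg x y, by linarith [gpB_add_gpB (B := B) x y, hB.gpB_nonneg y x]⟩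
  have hfp := hhyp.four_point_busemann' hgeo hB (g a) y x
  have hgp : gp (g a) y x = a := by
    rw [gp, dist_comm, hg.dist_left ha, dist_comm y, hg.dist_right ha]
    ring
  rw [hgp, min_self, gpB, hg.dist_left ha] at hfp
  linarith

theorem DeltaHyp.dist_le_of_isMinOn (hgeo : GeodesicMS X) (hhyp : DeltaHyp X δ) {σ : ℝ → X}
    {L : ℝ} (hL : 0 ≤ L) (hσ : LipschitzOnWith 1 σ (Icc 0 L)) {x y : X} (hσ0 : σ 0 = x)
    (hσL : σ L = y) {g : ℝ → X} (hg : IsGeodSegment g x y) {a : ℝ} (ha : a ∈ Icc 0 (dist x y))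
    {t₀ : ℝ} (ht₀ : IsMinOn (fun t => dist (σ t) (g a)) (Icc 0 L) t₀) :
    dist (σ t₀) (g a) ≤ a ∧ dist (σ t₀) (g a) ≤ dist x y - a ∧
      dist (σ t₀) (g a) ≤ L - dist x y + 2 * δ := by
  refine ⟨?_, ?_, ?_⟩
  · simpa [hσ0, hg.dist_left ha] using isMinOn_iff.1 ht₀ 0 ⟨le_rfl, hL⟩
  · simpa [hσL, dist_comm y, hg.dist_right ha] using isMinOn_iff.1 ht₀ L ⟨hL, le_rfl⟩
  have hcont : ContinuousOn (fun t => dist x (σ t)) (Icc 0 L) :=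
    (continuous_const.dist continuous_id).comp_continuousOn hσ.continuousOn
  obtain ⟨t, ht, hxt⟩ := intermediate_value_Icc hL hcont (by simpa [hσ0, hσL] using ha)
  have hty : dist (σ t) y ≤ L - t := by
    simpa [hσL, Real.dist_eq, abs_of_nonpos (sub_nonpos.2 ht.2)]
      using hσ.dist_le_mul t ht L ⟨hL, le_rfl⟩
  have hat : a ≤ t := by
    simpa [hσ0, hxt, Real.dist_eq, abs_of_nonneg ht.1] using hσ.dist_le_mul 0 ⟨le_rfl, hL⟩ t ht
  -- `σ t` is at distance `a` from `x`; compare it with `g τ` for `τ = (σ t ⬝ y)_x`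
  set τ := gp (σ t) y x
  have hτ : 2 * τ = a + dist x y - dist (σ t) y := by
    simp only [τ, gp, dist_comm _ x, hxt]
    ring
  have hτa : τ ≤ a := by linarith [dist_triangle x (σ t) y]
  have hτd : τ ∈ Icc 0 (dist x y) := ⟨gp_nonneg _ _ _, hτa.trans ha.2⟩
  have hS := hhyp.dist_le_of_le_gp hgeo hg (σ t) hτd le_rfl
  have hga : dist (g τ) (g a) = a - τ := by
    rw [hg.2.2 τ hτd a ha, abs_sub_comm, abs_of_nonneg (sub_nonneg.2 hτa)]
  linarith [dist_triangle (σ t) (g τ) (g a), isMinOn_iff.1 ht₀ t ht]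

theorem IsGeodSegment.busemann_le (hB : IsBusemann B) {g : ℝ → X} {x y : X}
    (hg : IsGeodSegment g x y) {t : ℝ} (ht : t ∈ Icc 0 (dist x y)) :
    B (g t) ≤ (B x + B y + dist x y) / 2 := by
  have hx := hB.sub_le_dist (g t) x
  have hy := hB.sub_le_dist (g t) y
  rw [dist_comm, hg.dist_left ht] at hx
  linarith [hg.dist_right ht]

theorem IsRay.lipschitzWith_comp {γ : ℝ → X} (hγ : IsRay γ) {φ : ℝ → ℝ}
    (hφ : LipschitzWith 1 φ) (hφ0 : ∀ t, 0 ≤ φ t) : LipschitzWith 1 (γ ∘ φ) :=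
  LipschitzWith.of_dist_le_mul fun s t => by
    simpa [hγ _ (hφ0 s) _ (hφ0 t), ← Real.dist_eq] using hφ.dist_le_mul s t

theorem IsGeodSegment.lipschitzWith_projIcc {g : ℝ → X} {x y : X} (hg : IsGeodSegment g x y) :
    LipschitzWith 1 (fun t => g (projIcc 0 (dist x y) dist_nonneg t)) :=
  LipschitzWith.of_dist_le_mul fun s t => by
    rw [hg.2.2 _ (projIcc _ _ _ s).2 _ (projIcc _ _ _ t).2, ← Real.dist_eq]
    exact (LipschitzWith.projIcc dist_nonneg).dist_le_mul s t

end Hyperbolic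

abbrev HoroProd {X₁ X₂ : Type*} (B₁ : X₁ → ℝ) (B₂ : X₂ → ℝ) : Type _ :=
  {q : X₁ × X₂ // B₁ q.1 = B₂ q.2}

namespace HoroProd

def swap {X₁ X₂ : Type*} {B₁ : X₁ → ℝ} {B₂ : X₂ → ℝ} (q : HoroProd B₁ B₂) :
    HoroProd B₂ B₁ :=
  ⟨q.1.swap, q.2.symm⟩

theorem swap_swap {X₁ X₂ : Type*} {B₁ : X₁ → ℝ} {B₂ : X₂ → ℝ} (q : HoroProd B₁ B₂) :
    q.swap.swap = q :=
  rfl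

variable {X₁ X₂ : Type*} [MetricSpace X₁] [MetricSpace X₂] {B₁ : X₁ → ℝ} {B₂ : X₂ → ℝ}

theorem intDist_le {c₁ : ℝ → X₁} {c₂ : ℝ → X₂} (h₁ : LipschitzWith 1 c₁)
    (h₂ : LipschitzWith 1 c₂) (hc : ∀ t, B₁ (c₁ t) = B₂ (c₂ t)) {x y : HoroProd B₁ B₂}
    {u v : ℝ} (hx : x.1 = (c₁ u, c₂ u)) (hy : y.1 = (c₁ v, c₂ v)) :
    intDist x y ≤ ENNReal.ofReal |u - v| := by
  have hf : LipschitzWith 1 fun t => (⟨(c₁ t, c₂ t), hc t⟩ : HoroProd B₁ B₂) := by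
    simpa using (h₁.prodMk h₂).subtype_mk hc
  have hfx : (⟨(c₁ u, c₂ u), hc u⟩ : HoroProd B₁ B₂) = x := Subtype.ext hx.symm
  have hfy : (⟨(c₁ v, c₂ v), hc v⟩ : HoroProd B₁ B₂) = y := Subtype.ext hy.symm
  simpa [hfx, hfy, edist_dist, Real.dist_eq] using intDist_le_of_lipschitzWith hf u v

theorem intDist_bRays_le {γ₁ : ℝ → X₁} {γ₂ : ℝ → X₂} (hγ₁ : IsBRay B₁ γ₁)
    (hγ₂ : IsBRay B₂ γ₂) (h0 : B₁ (γ₁ 0) = B₂ (γ₂ 0)) {x y : HoroProd B₁ B₂} {u v : ℝ}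
    (hu : 0 ≤ u) (hv : 0 ≤ v) (hx : x.1 = (γ₁ u, γ₂ u)) (hy : y.1 = (γ₁ v, γ₂ v)) :
    intDist x y ≤ ENNReal.ofReal |u - v| := by
  have hmax : LipschitzWith 1 fun t : ℝ => max t 0 := LipschitzWith.id.max_const 0
  refine intDist_le (hγ₁.1.lipschitzWith_comp hmax fun t => le_max_right t 0)
    (hγ₂.1.lipschitzWith_comp hmax fun t => le_max_right t 0) (fun t => ?_) (u := u) (v := v)
    (by simpa [max_eq_left hu]) (by simpa [max_eq_left hv])
  simp only [Function.comp_apply, hγ₁.busemann_apply (le_max_right t 0),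
    hγ₂.busemann_apply (le_max_right t 0), h0]

theorem lipschitzWith_swap : LipschitzWith 1 (swap : HoroProd B₁ B₂ → HoroProd B₂ B₁) :=
  LipschitzWith.of_dist_le_mul fun q q' => by
    simp [swap, Subtype.dist_eq, Prod.dist_eq, max_comm]

/-- Moving in the first factor along a geodesic at a fixed level `B₁ = B₂ (γ s)`, the second
coordinate follows the `B₂`-ray `γ`; this stays in the ray's domain as long as the geodesic does
not climb above `B₂ (γ 0)`, which `dist x₁ y₁ ≤ 2 s` guarantees. -/
theorem intDist_le_dist_fst (hgeo₁ : GeodesicMS X₁) (hB₁ : IsBusemann B₁) {γ : ℝ → X₂}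
    (hγ : IsBRay B₂ γ) {x y : HoroProd B₁ B₂} {s : ℝ} (hs : 0 ≤ s) (hx : x.1.2 = γ s)
    (hy : y.1.2 = γ s) (hxy : dist x.1.1 y.1.1 ≤ 2 * s) :
    intDist x y ≤ ENNReal.ofReal (dist x.1.1 y.1.1) := by
  obtain ⟨g, hg⟩ := hgeo₁ x.1.1 y.1.1
  set c := fun t => g (projIcc 0 (dist x.1.1 y.1.1) dist_nonneg t)
  have hlevel : ∀ z : HoroProd B₁ B₂, z.1.2 = γ s → B₁ z.1.1 = B₂ (γ 0) - s := fun z hz => by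
    rw [z.2, hz, hγ.busemann_apply hs]
  have hc : ∀ t, B₁ (c t) ≤ B₂ (γ 0) := fun t => by
    linarith [hg.busemann_le hB₁ (projIcc _ _ dist_nonneg t).2, hlevel x hx, hlevel y hy]
  have hφ : LipschitzWith 1 fun t => B₂ (γ 0) - B₁ (c t) := by
    refine LipschitzWith.of_le_add fun t t' => ?_
    have := hg.lipschitzWith_projIcc.dist_le_mul t t'
    simp only [NNReal.coe_one, one_mul] at this
    linarith [hB₁.sub_le_dist (c t') (c t), dist_comm (c t) (c t')]
  have hend : ∀ z : HoroProd B₁ B₂, z.1.2 = γ s → γ (B₂ (γ 0) - B₁ z.1.1) = z.1.2 := by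
    intro z hz
    rw [hlevel z hz, sub_sub_cancel, hz]
  have := intDist_le hg.lipschitzWith_projIcc
    (hγ.1.lipschitzWith_comp hφ fun t => sub_nonneg.2 (hc t)) (fun t => ?_)
    (x := x) (y := y) (u := 0) (v := dist x.1.1 y.1.1) ?_ ?_
  · simpa using this
  · show B₁ (c t) = B₂ (γ (B₂ (γ 0) - B₁ (c t)))
    rw [hγ.busemann_apply (sub_nonneg.2 (hc t)), sub_sub_cancel]
  · simp [c, hg.1, hend x hx]
  · simp [c, hg.2.1, hend y hy]

theorem intDist_le_dist_snd (hgeo₂ : GeodesicMS X₂) (hB₂ : IsBusemann B₂) {γ : ℝ → X₁}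
    (hγ : IsBRay B₁ γ) {x y : HoroProd B₁ B₂} {s : ℝ} (hs : 0 ≤ s) (hx : x.1.1 = γ s)
    (hy : y.1.1 = γ s) (hxy : dist x.1.2 y.1.2 ≤ 2 * s) :
    intDist x y ≤ ENNReal.ofReal (dist x.1.2 y.1.2) := by
  have hswap := lipschitzWith_swap.intDist_le x.swap y.swap
  rw [swap_swap, swap_swap] at hswap
  exact hswap.trans (intDist_le_dist_fst hgeo₂ hB₂ hγ (x := x.swap) (y := y.swap) hs hx hy hxy)

/-- Go down the rays from `x` to depth `A`, cross over in each factor in turn, and climb the rays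
up to `y` from depth `A'`. -/
theorem intDist_le_via_bRays (hgeo₁ : GeodesicMS X₁) (hgeo₂ : GeodesicMS X₂)
    (hB₁ : IsBusemann B₁) (hB₂ : IsBusemann B₂) {x y : HoroProd B₁ B₂} {γ₁ γ₁' : ℝ → X₁}
    {γ₂ γ₂' : ℝ → X₂} (hγ₁ : IsBRay B₁ γ₁) (hγ₁' : IsBRay B₁ γ₁') (hγ₂ : IsBRay B₂ γ₂)
    (hγ₂' : IsBRay B₂ γ₂') (hγ₁0 : γ₁ 0 = x.1.1) (hγ₁'0 : γ₁' 0 = y.1.1)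
    (hγ₂0 : γ₂ 0 = x.1.2) (hγ₂'0 : γ₂' 0 = y.1.2) {A A' : ℝ} (hA : 0 ≤ A) (hA' : 0 ≤ A')
    (hlevel : B₁ x.1.1 - A = B₁ y.1.1 - A') (h₁ : dist (γ₁ A) (γ₁' A') ≤ 2 * A)
    (h₂ : dist (γ₂ A) (γ₂' A') ≤ 2 * A') :
    intDist x y ≤
      ENNReal.ofReal (A + dist (γ₁ A) (γ₁' A') + dist (γ₂ A) (γ₂' A') + A') := by
  have e₁ : B₁ (γ₁ A) = B₁ x.1.1 - A := by rw [hγ₁.busemann_apply hA, hγ₁0]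
  have e₁' : B₁ (γ₁' A') = B₁ x.1.1 - A := by rw [hγ₁'.busemann_apply hA', hγ₁'0, hlevel]
  have e₂ : B₂ (γ₂ A) = B₁ x.1.1 - A := by rw [hγ₂.busemann_apply hA, hγ₂0, x.2]
  have e₂' : B₂ (γ₂' A') = B₁ x.1.1 - A := by rw [hγ₂'.busemann_apply hA', hγ₂'0, ← y.2, hlevel]
  let q₁ : HoroProd B₁ B₂ := ⟨(γ₁ A, γ₂ A), e₁.trans e₂.symm⟩
  let q₂ : HoroProd B₁ B₂ := ⟨(γ₁' A', γ₂ A), e₁'.trans e₂.symm⟩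
  let q₃ : HoroProd B₁ B₂ := ⟨(γ₁' A', γ₂' A'), e₁'.trans e₂'.symm⟩
  have hγ0 : B₁ (γ₁ 0) = B₂ (γ₂ 0) := by rw [hγ₁0, hγ₂0, x.2]
  have hγ'0 : B₁ (γ₁' 0) = B₂ (γ₂' 0) := by rw [hγ₁'0, hγ₂'0, y.2]
  have leg₁ : intDist x q₁ ≤ ENNReal.ofReal A := by
    simpa [abs_of_nonneg hA] using intDist_bRays_le hγ₁ hγ₂ hγ0 le_rfl hA (x := x) (y := q₁)
      (by simp [hγ₁0, hγ₂0]) rfl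
  have leg₂ : intDist q₁ q₂ ≤ ENNReal.ofReal (dist (γ₁ A) (γ₁' A')) :=
    intDist_le_dist_fst hgeo₁ hB₁ hγ₂ hA rfl rfl h₁
  have leg₃ : intDist q₂ q₃ ≤ ENNReal.ofReal (dist (γ₂ A) (γ₂' A')) :=
    intDist_le_dist_snd hgeo₂ hB₂ hγ₁' hA' rfl rfl h₂
  have leg₄ : intDist q₃ y ≤ ENNReal.ofReal A' := by
    simpa [abs_of_nonneg hA'] using intDist_bRays_le hγ₁' hγ₂' hγ'0 hA' le_rfl (x := q₃)
      (y := y) rfl (by simp [hγ₁'0, hγ₂'0])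
  calc intDist x y ≤ intDist x q₁ + intDist q₁ q₂ + intDist q₂ q₃ + intDist q₃ y :=
        (intDist_triangle x q₃ y).trans <| add_le_add_left ((intDist_triangle x q₂ q₃).trans <|
          add_le_add_left (intDist_triangle x q₁ q₂) _) _
    _ ≤ ENNReal.ofReal A + ENNReal.ofReal (dist (γ₁ A) (γ₁' A')) +
        ENNReal.ofReal (dist (γ₂ A) (γ₂' A')) + ENNReal.ofReal A' := by gcongr
    _ = _ := by
      rw [← ENNReal.ofReal_add, ← ENNReal.ofReal_add, ← ENNReal.ofReal_add] <;> positivity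

theorem gpB_snd_le_gpB_fst {x y : HoroProd B₁ B₂} (h : dist x.1.2 y.1.2 ≤ dist x.1.1 y.1.1) :
    gpB B₂ x.1.2 y.1.2 ≤ gpB B₁ x.1.1 y.1.1 := by
  simp only [gpB, ← x.2, ← y.2]
  linarith

theorem max_gpB_eq {x y : HoroProd B₁ B₂} (h : dist x.1.2 y.1.2 ≤ dist x.1.1 y.1.1) :
    max (gpB B₁ x.1.1 y.1.1) (gpB B₂ x.1.2 y.1.2) = gpB B₁ x.1.1 y.1.1 ∧
      max (gpB B₁ y.1.1 x.1.1) (gpB B₂ y.1.2 x.1.2) = gpB B₁ y.1.1 x.1.1 :=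
  ⟨max_eq_left (gpB_snd_le_gpB_fst h),
    max_eq_left (gpB_snd_le_gpB_fst (by rwa [dist_comm, dist_comm y.1.1]))⟩

theorem lipschitzOnWith_of_intDist {σ : ℝ → HoroProd B₁ B₂} {s : Set ℝ}
    (hσ : ∀ u ∈ s, ∀ v ∈ s, intDist (σ u) (σ v) = ENNReal.ofReal |u - v|) :
    LipschitzOnWith 1 (fun t => (σ t).1.1) s ∧ LipschitzOnWith 1 (fun t => (σ t).1.2) s := by
  have hσY : LipschitzOnWith 1 σ s := lipschitzOnWith_of_intDist_le fun u hu v hv => by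
    rw [hσ u hu v hv, edist_dist, Real.dist_eq]
  have h₁ := (LipschitzWith.prod_fst.comp (LipschitzWith.subtype_val _)).comp_lipschitzOnWith hσY
  have h₂ := (LipschitzWith.prod_snd.comp (LipschitzWith.subtype_val _)).comp_lipschitzOnWith hσY
  rw [one_mul, one_mul] at h₁ h₂
  exact ⟨h₁, h₂⟩

theorem intDist_le_dist_fst_add {δ : ℝ} (hδ : 0 ≤ δ) (hgeo₁ : GeodesicMS X₁)
    (hgeo₂ : GeodesicMS X₂) (hhyp₁ : DeltaHyp X₁ δ) (hhyp₂ : DeltaHyp X₂ δ)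
    (hB₁ : IsBusemann B₁) (hB₂ : IsBusemann B₂) {x y : HoroProd B₁ B₂}
    (hnorm : dist x.1.2 y.1.2 ≤ dist x.1.1 y.1.1) {γ₁ γ₁' : ℝ → X₁} {γ₂ γ₂' : ℝ → X₂}
    (hγ₁ : IsBRay B₁ γ₁) (hγ₁' : IsBRay B₁ γ₁') (hγ₂ : IsBRay B₂ γ₂) (hγ₂' : IsBRay B₂ γ₂')
    (hγ₁0 : γ₁ 0 = x.1.1) (hγ₁'0 : γ₁' 0 = y.1.1) (hγ₂0 : γ₂ 0 = x.1.2)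
    (hγ₂'0 : γ₂' 0 = y.1.2) :
    intDist x y ≤ ENNReal.ofReal (dist x.1.1 y.1.1 + 36 * δ) ∧
      (6 * δ ≤ gpB B₁ x.1.1 y.1.1 → 6 * δ ≤ gpB B₁ y.1.1 x.1.1 →
        intDist x y ≤ ENNReal.ofReal (dist x.1.1 y.1.1 + 20 * δ)) := by
  set a := gpB B₁ x.1.1 y.1.1
  set b := gpB B₁ y.1.1 x.1.1
  have hab : a + b = dist x.1.1 y.1.1 := gpB_add_gpB _ _
  have ha : 0 ≤ a := hB₁.gpB_nonneg _ _
  have hb : 0 ≤ b := hB₁.gpB_nonneg _ _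
  have hlevel : ∀ s, B₁ x.1.1 - (a + s) = B₁ y.1.1 - (b + s) := fun s => by
    linarith [gpB_sub_gpB (B := B₁) x.1.1 y.1.1]
  have hR₁ : ∀ s, 0 ≤ s → dist (γ₁ (a + s)) (γ₁' (b + s)) ≤ 12 * δ := fun s hs =>
    hhyp₁.dist_bRay_le hgeo₁ hB₁ hγ₁ hγ₁' hγ₁0 hγ₁'0 (by linarith) (hlevel s)
  have hR₂ : ∀ s, 0 ≤ s → dist (γ₂ (a + s)) (γ₂' (b + s)) ≤ 12 * δ := fun s hs =>
    hhyp₂.dist_bRay_le hgeo₂ hB₂ hγ₂ hγ₂' hγ₂0 hγ₂'0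
      (by linarith [gpB_snd_le_gpB_fst hnorm]) (by rw [← x.2, ← y.2]; exact hlevel s)
  have hpath := fun s (hs : 0 ≤ s) => intDist_le_via_bRays hgeo₁ hgeo₂ hB₁ hB₂ hγ₁ hγ₁' hγ₂ hγ₂'
    hγ₁0 hγ₁'0 hγ₂0 hγ₂'0 (A := a + s) (A' := b + s) (by linarith) (by linarith) (hlevel s)
  constructor
  · have h₁ := hR₁ (6 * δ) (by linarith)
    have h₂ := hR₂ (6 * δ) (by linarith)
    refine (hpath (6 * δ) (by linarith) (by linarith) (by linarith)).trans
      (ENNReal.ofReal_le_ofReal ?_)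
    linarith
  · intro ha6 hb6
    have h₁ : dist (γ₁ (a + 0)) (γ₁' (b + 0)) ≤ 8 * δ := by
      simpa using hhyp₁.dist_bRay_gpB_le hgeo₁ hB₁ hγ₁ hγ₁' hγ₁0 hγ₁'0
    have h₂ := hR₂ 0 le_rfl
    refine (hpath 0 le_rfl (by linarith) (by linarith)).trans (ENNReal.ofReal_le_ofReal ?_)
    linarith

theorem sub_le_dist_of_busemann_le (hB₁ : IsBusemann B₁) (hB₂ : IsBusemann B₂)
    {x z : HoroProd B₁ B₂} {w : X₁} {a ε : ℝ} (hε : 0 ≤ ε) (hxw : dist x.1.1 w = a)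
    (hw : B₁ w ≤ B₁ x.1.1 - a + ε) :
    a - (ε + dist z.1.1 w) ≤ dist x.1.1 z.1.1 ∧ a - (ε + dist z.1.1 w) ≤ dist x.1.2 z.1.2 := by
  refine ⟨by linarith [dist_triangle x.1.1 z.1.1 w], ?_⟩
  have := hB₂.sub_le_dist x.1.2 z.1.2
  rw [← x.2, ← z.2] at this
  linarith [hB₁.sub_le_dist z.1.1 w]

theorem eVariationOn_bounds {σ : ℝ → HoroProd B₁ B₂} {x y : HoroProd B₁ B₂} {L t₀ a b ρ r : ℝ}
    (hσ₁ : LipschitzOnWith 1 (fun t => (σ t).1.1) (Icc 0 L))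
    (hσ₂ : LipschitzOnWith 1 (fun t => (σ t).1.2) (Icc 0 L)) (hσ0 : σ 0 = x) (hσL : σ L = y)
    (ht₀ : t₀ ∈ Icc 0 L) (hρ : ρ ≤ r) (hL : L - (a + b) + ρ ≤ r)
    (hx : a - ρ ≤ dist x.1.1 (σ t₀).1.1 ∧ a - ρ ≤ dist x.1.2 (σ t₀).1.2)
    (hy : b - ρ ≤ dist y.1.1 (σ t₀).1.1 ∧ b - ρ ≤ dist y.1.2 (σ t₀).1.2) :
    (ENNReal.ofReal (a - r) ≤ eVariationOn (fun t => (σ t).1.1) (Icc 0 t₀) ∧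
      eVariationOn (fun t => (σ t).1.1) (Icc 0 t₀) ≤ ENNReal.ofReal (a + r)) ∧
    (ENNReal.ofReal (a - r) ≤ eVariationOn (fun t => (σ t).1.2) (Icc 0 t₀) ∧
      eVariationOn (fun t => (σ t).1.2) (Icc 0 t₀) ≤ ENNReal.ofReal (a + r)) ∧
    (ENNReal.ofReal (b - r) ≤ eVariationOn (fun t => (σ t).1.1) (Icc t₀ L) ∧
      eVariationOn (fun t => (σ t).1.1) (Icc t₀ L) ≤ ENNReal.ofReal (b + r)) ∧
    (ENNReal.ofReal (b - r) ≤ eVariationOn (fun t => (σ t).1.2) (Icc t₀ L) ∧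
      eVariationOn (fun t => (σ t).1.2) (Icc t₀ L) ≤ ENNReal.ofReal (b + r)) := by
  have hL0 : 0 ≤ L := ht₀.1.trans ht₀.2
  have hxt₀ : dist x.1.1 (σ t₀).1.1 ≤ t₀ := by
    simpa [hσ0, Real.dist_eq, abs_of_nonneg ht₀.1] using hσ₁.dist_le_mul 0 ⟨le_rfl, hL0⟩ t₀ ht₀
  have hyt₀ : dist y.1.1 (σ t₀).1.1 ≤ L - t₀ := by
    rw [dist_comm]
    simpa [hσL, Real.dist_eq, abs_of_nonpos (sub_nonpos.2 ht₀.2)]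
      using hσ₁.dist_le_mul t₀ ht₀ L ⟨hL0, le_rfl⟩
  have hI₁ : Icc 0 t₀ ⊆ Icc 0 L := Icc_subset_Icc le_rfl ht₀.2
  have hI₂ : Icc t₀ L ⊆ Icc 0 L := Icc_subset_Icc ht₀.1 le_rfl
  refine ⟨(hσ₁.mono hI₁).ofReal_le_eVariationOn_le ht₀.1 ?_ ?_,
    (hσ₂.mono hI₁).ofReal_le_eVariationOn_le ht₀.1 ?_ ?_,
    (hσ₁.mono hI₂).ofReal_le_eVariationOn_le ht₀.2 ?_ ?_,
    (hσ₂.mono hI₂).ofReal_le_eVariationOn_le ht₀.2 ?_ ?_⟩ <;>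
  (try simp only [hσ0, hσL, dist_comm (σ t₀).1.1, dist_comm (σ t₀).1.2]) <;> linarith

end HoroProd

theorem stmt14_general {X₁ X₂ : Type*} [MetricSpace X₁] [MetricSpace X₂]
    (hgeo₁ : GeodesicMS X₁) (hgeo₂ : GeodesicMS X₂)
    (δ : ℝ) (hδ : 0 ≤ δ) (hhyp₁ : DeltaHyp X₁ δ) (hhyp₂ : DeltaHyp X₂ δ)
    (B₁ : X₁ → ℝ) (B₂ : X₂ → ℝ) (hB₁ : IsBusemann B₁) (hB₂ : IsBusemann B₂)
    (p p' : {q : X₁ × X₂ // B₁ q.1 = B₂ q.2})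
    -- normalization: d₁(p₁,p₁') ≥ d₂(p₂,p₂') and B₁(p₁) = B₂(p₂) = 0
    (hnorm : dist p.1.2 p'.1.2 ≤ dist p.1.1 p'.1.1)
    -- B-rays starting at the components of p and p'
    (γ₁ γ₁' : ℝ → X₁) (γ₂ γ₂' : ℝ → X₂)
    (hγ₁ : IsBRay B₁ γ₁) (hγ₁' : IsBRay B₁ γ₁')
    (hγ₂ : IsBRay B₂ γ₂) (hγ₂' : IsBRay B₂ γ₂')
    (hγ₁0 : γ₁ 0 = p.1.1) (hγ₁'0 : γ₁' 0 = p'.1.1)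
    (hγ₂0 : γ₂ 0 = p.1.2) (hγ₂'0 : γ₂' 0 = p'.1.2)
    -- a = max{a₁,a₂} and b = max{b₁,b₂}
    (a b : ℝ) (ha : a = max (gpB B₁ p.1.1 p'.1.1) (gpB B₂ p.1.2 p'.1.2))
    (hb : b = max (gpB B₁ p'.1.1 p.1.1) (gpB B₂ p'.1.2 p.1.2))
    -- σ : a unit-speed geodesic from p to p' in (Y,d), d the interior metric
    (L : ℝ) (hL : intDist p p' = ENNReal.ofReal L)
    (σ : ℝ → {q : X₁ × X₂ // B₁ q.1 = B₂ q.2})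
    (hσ0 : σ 0 = p) (hσL : σ L = p')
    (hσ : ∀ s ∈ Set.Icc (0 : ℝ) L, ∀ t ∈ Set.Icc (0 : ℝ) L,
      intDist (σ s) (σ t) = ENNReal.ofReal |s - t|)
    -- γ_{p₁p₁'} : a geodesic segment in X₁ from p₁ to p₁'
    (g : ℝ → X₁) (hg : IsGeodSegment g p.1.1 p'.1.1)
    -- t₀ : a minimizer of t ↦ d₁(σ₁(t), γ_{p₁p₁'}(a)) on [0, d(p,p')]
    (t₀ : ℝ) (ht₀ : t₀ ∈ Set.Icc (0 : ℝ) L)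
    (ht₀min : ∀ t ∈ Set.Icc (0 : ℝ) L,
      dist ((σ t₀).1.1) (g a) ≤ dist ((σ t).1.1) (g a))
    :
    (ENNReal.ofReal (a - 50 * δ) ≤ eVariationOn (fun t => (σ t).1.1) (Set.Icc 0 t₀) ∧
      eVariationOn (fun t => (σ t).1.1) (Set.Icc 0 t₀) ≤ ENNReal.ofReal (a + 50 * δ)) ∧
    (ENNReal.ofReal (a - 50 * δ) ≤ eVariationOn (fun t => (σ t).1.2) (Set.Icc 0 t₀) ∧
      eVariationOn (fun t => (σ t).1.2) (Set.Icc 0 t₀) ≤ ENNReal.ofReal (a + 50 * δ)) ∧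
    (ENNReal.ofReal (b - 50 * δ) ≤ eVariationOn (fun t => (σ t).1.1) (Set.Icc t₀ L) ∧
      eVariationOn (fun t => (σ t).1.1) (Set.Icc t₀ L) ≤ ENNReal.ofReal (b + 50 * δ)) ∧
    (ENNReal.ofReal (b - 50 * δ) ≤ eVariationOn (fun t => (σ t).1.2) (Set.Icc t₀ L) ∧
      eVariationOn (fun t => (σ t).1.2) (Set.Icc t₀ L) ≤ ENNReal.ofReal (b + 50 * δ)) := by
  have hL0 : 0 ≤ L := ht₀.1.trans ht₀.2
  obtain ⟨hσ₁, hσ₂⟩ := HoroProd.lipschitzOnWith_of_intDist hσ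
  obtain ⟨ha₁, hb₁⟩ := HoroProd.max_gpB_eq hnorm
  rw [ha₁] at ha
  rw [hb₁] at hb
  have hab : a + b = dist p.1.1 p'.1.1 := by rw [ha, hb]; exact gpB_add_gpB _ _
  have hamem : a ∈ Icc 0 (dist p.1.1 p'.1.1) :=
    ⟨ha ▸ hB₁.gpB_nonneg _ _, by linarith [hb ▸ hB₁.gpB_nonneg p'.1.1 p.1.1]⟩
  obtain ⟨hL₁, hL₂⟩ := HoroProd.intDist_le_dist_fst_add hδ hgeo₁ hgeo₂ hhyp₁ hhyp₂ hB₁ hB₂ hnorm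
    hγ₁ hγ₁' hγ₂ hγ₂' hγ₁0 hγ₁'0 hγ₂0 hγ₂'0
  rw [hL, ENNReal.ofReal_le_ofReal_iff (by positivity)] at hL₁ hL₂
  rw [← ha, ← hb] at hL₂
  obtain ⟨hEa, hEb, hEL⟩ := hhyp₁.dist_le_of_isMinOn hgeo₁ hL0 hσ₁ (by rw [hσ0]) (by rw [hσL]) hg
    hamem (isMinOn_iff.2 ht₀min)
  set E := dist (σ t₀).1.1 (g a)
  -- if `a` or `b` is below `6δ` then so is `E`; otherwise the short competitor path applies
  have hK : L - (a + b) + E ≤ 42 * δ := by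
    by_cases h6 : 6 * δ ≤ a ∧ 6 * δ ≤ b
    · linarith [hL₂ h6.1 h6.2]
    · rcases not_and_or.1 h6 with h | h <;> linarith
  have hBw : B₁ (g a) ≤ B₁ p.1.1 - a + 4 * δ := by
    simpa only [← ha] using hhyp₁.busemann_le_of_isGeodSegment hgeo₁ hB₁ hg
  have hBab : a - b = B₁ p.1.1 - B₁ p'.1.1 := by rw [ha, hb]; exact gpB_sub_gpB _ _
  exact HoroProd.eVariationOn_bounds hσ₁ hσ₂ hσ0 hσL ht₀ (ρ := 4 * δ + E) (r := 50 * δ)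
    (by linarith) (by linarith)
    (HoroProd.sub_le_dist_of_busemann_le hB₁ hB₂ (by linarith) (hg.dist_left hamem) hBw)
    (HoroProd.sub_le_dist_of_busemann_le hB₁ hB₂ (by linarith)
      (by rw [dist_comm, hg.dist_right hamem]; linarith) (by linarith))

/-- Lemma 10: in the normalized setup for geodesics in `Y`, splitting `σ = ᾱ * β̄` at `t₀`,
one has `|L(ᾱᵢ) − a| ≤ 50δ` and `|L(β̄ᵢ) − b| ≤ 50δ` for `i = 1,2` (stated as two-sided
bounds on the lengths, which are a priori elements of `ℝ≥0∞`). -/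
theorem stmt14 {X₁ X₂ : Type*} [MetricSpace X₁] [MetricSpace X₂]
    [ProperSpace X₁] [ProperSpace X₂]
    (hgeo₁ : GeodesicMS X₁) (hgeo₂ : GeodesicMS X₂)
    (δ : ℝ) (hδ : 0 ≤ δ) (hhyp₁ : DeltaHyp X₁ δ) (hhyp₂ : DeltaHyp X₂ δ)
    (B₁ : X₁ → ℝ) (B₂ : X₂ → ℝ) (hB₁ : IsBusemann B₁) (hB₂ : IsBusemann B₂)
    (p p' : {q : X₁ × X₂ // B₁ q.1 = B₂ q.2})
    -- normalization: d₁(p₁,p₁') ≥ d₂(p₂,p₂') and B₁(p₁) = B₂(p₂) = 0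
    (hnorm : dist p.1.2 p'.1.2 ≤ dist p.1.1 p'.1.1)
    (hB₁p : B₁ p.1.1 = 0)
    -- B-rays starting at the components of p and p'
    (γ₁ γ₁' : ℝ → X₁) (γ₂ γ₂' : ℝ → X₂)
    (hγ₁ : IsBRay B₁ γ₁) (hγ₁' : IsBRay B₁ γ₁')
    (hγ₂ : IsBRay B₂ γ₂) (hγ₂' : IsBRay B₂ γ₂')
    (hγ₁0 : γ₁ 0 = p.1.1) (hγ₁'0 : γ₁' 0 = p'.1.1)
    (hγ₂0 : γ₂ 0 = p.1.2) (hγ₂'0 : γ₂' 0 = p'.1.2)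
    -- a = max{a₁,a₂} and b = max{b₁,b₂}
    (a b : ℝ) (ha : a = max (gpB B₁ p.1.1 p'.1.1) (gpB B₂ p.1.2 p'.1.2))
    (hb : b = max (gpB B₁ p'.1.1 p.1.1) (gpB B₂ p'.1.2 p.1.2))
    -- σ : a unit-speed geodesic from p to p' in (Y,d), d the interior metric
    (L : ℝ) (hL0 : 0 ≤ L) (hL : intDist p p' = ENNReal.ofReal L)
    (σ : ℝ → {q : X₁ × X₂ // B₁ q.1 = B₂ q.2})
    (hσ0 : σ 0 = p) (hσL : σ L = p')
    (hσ : ∀ s ∈ Set.Icc (0 : ℝ) L, ∀ t ∈ Set.Icc (0 : ℝ) L,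
      intDist (σ s) (σ t) = ENNReal.ofReal |s - t|)
    -- γ_{p₁p₁'} : a geodesic segment in X₁ from p₁ to p₁'
    (g : ℝ → X₁) (hg : IsGeodSegment g p.1.1 p'.1.1)
    -- t₀ : a minimizer of t ↦ d₁(σ₁(t), γ_{p₁p₁'}(a)) on [0, d(p,p')]
    (t₀ : ℝ) (ht₀ : t₀ ∈ Set.Icc (0 : ℝ) L)
    (ht₀min : ∀ t ∈ Set.Icc (0 : ℝ) L,
      dist ((σ t₀).1.1) (g a) ≤ dist ((σ t).1.1) (g a))
    :
    (ENNReal.ofReal (a - 50 * δ) ≤ eVariationOn (fun t => (σ t).1.1) (Set.Icc 0 t₀) ∧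
      eVariationOn (fun t => (σ t).1.1) (Set.Icc 0 t₀) ≤ ENNReal.ofReal (a + 50 * δ)) ∧
    (ENNReal.ofReal (a - 50 * δ) ≤ eVariationOn (fun t => (σ t).1.2) (Set.Icc 0 t₀) ∧
      eVariationOn (fun t => (σ t).1.2) (Set.Icc 0 t₀) ≤ ENNReal.ofReal (a + 50 * δ)) ∧
    (ENNReal.ofReal (b - 50 * δ) ≤ eVariationOn (fun t => (σ t).1.1) (Set.Icc t₀ L) ∧
      eVariationOn (fun t => (σ t).1.1) (Set.Icc t₀ L) ≤ ENNReal.ofReal (b + 50 * δ)) ∧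
    (ENNReal.ofReal (b - 50 * δ) ≤ eVariationOn (fun t => (σ t).1.2) (Set.Icc t₀ L) ∧
      eVariationOn (fun t => (σ t).1.2) (Set.Icc t₀ L) ≤ ENNReal.ofReal (b + 50 * δ)) :=
  stmt14_general hgeo₁ hgeo₂ δ hδ hhyp₁ hhyp₂ B₁ B₂ hB₁ hB₂ p p' hnorm γ₁ γ₁' γ₂ γ₂' hγ₁ hγ₁' hγ₂
    hγ₂' hγ₁0 hγ₁'0 hγ₂0 hγ₂'0 a b ha hb L hL σ hσ0 hσL hσ g hg t₀ ht₀ ht₀min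
end
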